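/- arXiv:2109.09205 — 6 statements merged into one kernel-verified Lean document; each statement's English description precedes it below -/
import Mathlib

section
/- Let p ≥ 3 be an integer, β > 0 and λ > 0 be reals, and let Γ be a graph on m vertices with minimum degree at least (1 − 2/(2p−3) + β)·m and with at most (10p)^(−2p)·β·λ·m^p copies of K_p. Then there is a set of at most λ·m² edges of Γ whose deletion yields a K_p-free graph. -/
/-!
Write `cnt_W(u, v)` for the number of `q`-cliques inside a vertex set `W` that contain `u` and `v`.
The heart of the proof is a supersaturation bound: if every vertex of `W` has at least
`(1 - 2/(2q-3) + β)|W|` neighbours in `W`, then for every `q`-clique `S ⊆ W` the sum of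
`cnt_W(u, v)` over ordered pairs of distinct `u, v ∈ S` is at least `c_q β |W|^(q-2)`.
It is proved by induction on `q`. For a `(q+1)`-clique, averaging over its `q`-subsets `A` gives
one whose common neighbourhood `Y` has at least `(2q-4)/((q+1)(2q-1)) · |W|` vertices. Inside the
neighbourhood of each `y ∈ Y` the degree condition for `q` holds, so the induction hypothesis
applies to `A` there; and each `(q+1)`-clique through `u, v` arises in this way from at most
`q - 1` vertices `y`.

For the theorem, delete every edge `uv` with `cnt(u, v) ≥ Q := c_p β m^(p-2) / (p(p-1))`. Each
`K_p` contains such an edge by the bound above, and double counting pairs against cliques shows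
that there are at most `p(p-1) #K_p / Q ≤ λ m²` of them.
-/

open SimpleGraph

/-- `ContainsCopy G Γ` : `Γ` contains a (not necessarily induced) copy of `G`. -/
def ContainsCopy {α β : Type*} (G : SimpleGraph α) (Γ : SimpleGraph β) : Prop :=
  ∃ f : α → β, Function.Injective f ∧ ∀ ⦃a b⦄, G.Adj a b → Γ.Adj (f a) (f b)

/-- The book graph `B_{k,n}`: `n` vertices, the first `k` of which form the spine. -/
def Book (k n : ℕ) : SimpleGraph (Fin n) :=
  SimpleGraph.fromRel (fun a b => (a : ℕ) < k ∨ (b : ℕ) < k)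

/-- The Ramsey number `r(G,H)`: the least `N` such that every graph `Γ` on `N` vertices
contains a copy of `G`, or its complement contains a copy of `H`. -/
noncomputable def ramseyNumber {α β : Type*} (G : SimpleGraph α) (H : SimpleGraph β) : ℕ :=
  sInf {N | ∀ Γ : SimpleGraph (Fin N), ContainsCopy G Γ ∨ ContainsCopy H Γᶜ}

/-- The degree of a vertex. -/
noncomputable def degCount {V : Type*} (Γ : SimpleGraph V) (v : V) : ℕ :=
  (Γ.neighborSet v).ncard

/-- The number of copies of `K_p` in `Γ`, i.e. sets of `p` pairwise adjacent vertices. -/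
noncomputable def cliqueCount {V : Type*} (Γ : SimpleGraph V) (p : ℕ) : ℕ :=
  {s : Finset V | Γ.IsNClique p s}.ncard

/-- `Γ` contains an induced copy of the complete multipartite graph with all parts
of size `t`, with parts `P 0, …, P (r-1)`. -/
def IsCompleteMultipartiteIn {V : Type*} (Γ : SimpleGraph V) {r : ℕ} (t : ℕ)
    (P : Fin r → Finset V) : Prop :=
  (∀ i, (P i).card = t) ∧
  (∀ i j, i ≠ j → Disjoint (P i) (P j)) ∧
  (∀ i, ∀ a ∈ P i, ∀ b ∈ P i, ¬ Γ.Adj a b) ∧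
  (∀ i j, i ≠ j → ∀ a ∈ P i, ∀ b ∈ P j, Γ.Adj a b)

/-- The number of edges of `Γ` with both endpoints inside `s`. -/
noncomputable def edgesInside {V : Type*} (Γ : SimpleGraph V) (s : Finset V) : ℕ :=
  {e ∈ Γ.edgeSet | ∀ v ∈ e, v ∈ s}.ncard

open Finset Real

lemma one_third_le_pow {q : ℕ} (hq : 3 ≤ q) :
    1 / 3 ≤ (1 - 2 / (2 * (q : ℝ) - 1)) ^ (q - 2) := by
  have hq' : (3 : ℝ) ≤ q := by exact_mod_cast hq
  set x : ℝ := 2 / (2 * q - 3) with hx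
  have hx0 : 0 ≤ x := div_nonneg zero_le_two (by linarith)
  have hinv : 1 - 2 / (2 * (q : ℝ) - 1) = (1 + x)⁻¹ := by
    rw [hx, one_add_div (by linarith), inv_div, one_sub_div (by linarith)]
    ring_nf
  have hnx : ((q - 2 : ℕ) : ℝ) * x ≤ 1 := by
    rw [Nat.cast_sub (by omega), hx, mul_div_assoc', div_le_one (by linarith)]
    push_cast
    linarith
  have hpow : (1 + x) ^ (q - 2) ≤ 3 := calc
    (1 + x) ^ (q - 2) ≤ exp x ^ (q - 2) := by gcongr; linarith [add_one_le_exp x]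
    _ = exp ((q - 2 : ℕ) * x) := (exp_nat_mul x _).symm
    _ ≤ exp 1 := exp_le_exp.mpr hnx
    _ ≤ 3 := exp_one_lt_d9.le.trans (by norm_num)
  rw [hinv, inv_pow, one_div]
  exact inv_anti₀ (by positivity) hpow

/-- The constant `c_q` of the supersaturation bound: small enough for `cliqueConst_succ_le`, and
`c_p / (p(p-1))` is the `(10p)^(-2p) p(p-1)` of the theorem. -/
noncomputable def cliqueConst (q : ℕ) : ℝ := ((q : ℝ) * (q - 1)) ^ 2 / (10 * q) ^ (2 * q)

lemma cliqueConst_pos {q : ℕ} (hq : 2 ≤ q) : 0 < cliqueConst q := by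
  have hq' : (2 : ℝ) ≤ q := by exact_mod_cast hq
  have : (0 : ℝ) < q * (q - 1) := by nlinarith
  unfold cliqueConst
  positivity

lemma cliqueConst_three_le_one : cliqueConst 3 ≤ 1 := by norm_num [cliqueConst]

lemma cliqueConst_succ_le {q : ℕ} (hq : 3 ≤ q) :
    (q - 1) * cliqueConst (q + 1) ≤
      (2 * q - 4) / ((q + 1) * (2 * q - 1)) * (1 - 2 / (2 * q - 1)) ^ (q - 2) * cliqueConst q := by
  have hq' : (3 : ℝ) ≤ q := by exact_mod_cast hq
  have hA : 0 < (10 * (q : ℝ)) ^ (2 * q) := by positivity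
  have hgrow : (10 * (q : ℝ)) ^ (2 * q) * (10 * (q + 1)) ^ 2 ≤
      (10 * (q + 1 : ℝ)) ^ (2 * (q + 1)) := by
    rw [show 2 * (q + 1) = 2 * q + 2 by ring, pow_add]
    gcongr
    linarith
  have hpoly : 3 * ((q + 1) * (2 * q - 1)) ≤ 100 * ((2 * q - 4) * (q - 1) : ℝ) := by nlinarith
  have hq1 : (0 : ℝ) < (q + 1) * (2 * q - 1) := by nlinarith
  have hthird := one_third_le_pow hq
  have hc := (cliqueConst_pos (by omega : 2 ≤ q)).le
  unfold cliqueConst at hc ⊢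
  push_cast
  calc _ ≤ ((q : ℝ) - 1) *
        (((q + 1) * (q + 1 - 1)) ^ 2 / ((10 * q) ^ (2 * q) * (10 * (q + 1)) ^ 2)) := by
        gcongr
        linarith
    _ = ((q : ℝ) - 1) * q ^ 2 / (100 * (10 * q) ^ (2 * q)) := by field_simp; ring
    _ ≤ (2 * q - 4) / ((q + 1) * (2 * q - 1)) / 3 * ((q * (q - 1)) ^ 2 / (10 * q) ^ (2 * q)) := by
        rw [div_div, div_mul_div_comm, div_le_div_iff₀ (by positivity) (by positivity)]
        have := mul_le_mul_of_nonneg_left hpoly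
          (mul_nonneg (mul_nonneg (by linarith) (sq_nonneg _)) hA.le :
            (0 : ℝ) ≤ (q - 1) * q ^ 2 * (10 * q) ^ (2 * q))
        nlinarith
    _ ≤ _ := by
        rw [div_eq_mul_one_div _ (3 : ℝ)]
        gcongr
        exact div_nonneg (by linarith) hq1.le

lemma cast_card_offDiag {α : Type*} [DecidableEq α] (s : Finset α) :
    (#s.offDiag : ℝ) = #s * (#s - 1) := by
  rw [offDiag_card, Nat.cast_sub (Nat.le_mul_self _)]
  push_cast
  ring

lemma sub_le_choose {d k : ℕ} (hk : 1 ≤ k) (hd : d ≤ k + 1) :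
    (d : ℝ) - (k - 1) ≤ d.choose k := by
  obtain hdk | rfl | rfl : d < k ∨ d = k ∨ d = k + 1 := by omega
  · have : (d : ℝ) + 1 ≤ k := by exact_mod_cast hdk
    linarith [(d.choose k).cast_nonneg (α := ℝ)]
  · simp
  · rw [Nat.choose_succ_self_right]
    have : (1 : ℝ) ≤ k := by exact_mod_cast hk
    push_cast
    linarith

namespace SimpleGraph

section NeighbourhoodsIn

variable {V : Type*} (G : SimpleGraph V) [DecidableRel G.Adj]

def nbhdIn (W : Finset V) (v : V) : Finset V := {x ∈ W | G.Adj v x}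

def commonNbhdIn (W A : Finset V) : Finset V := {x ∈ W | ∀ a ∈ A, G.Adj a x}

def MinDegreeIn (W : Finset V) (c : ℝ) : Prop := ∀ w ∈ W, c * #W ≤ #(G.nbhdIn W w)

variable {G}

lemma mem_commonNbhdIn {W A : Finset V} {x : V} :
    x ∈ G.commonNbhdIn W A ↔ x ∈ W ∧ ∀ a ∈ A, G.Adj a x :=
  mem_filter

lemma mem_nbhdIn {W : Finset V} {v x : V} : x ∈ G.nbhdIn W v ↔ x ∈ W ∧ G.Adj v x :=
  mem_filter

lemma nbhdIn_subset (W : Finset V) (v : V) : G.nbhdIn W v ⊆ W := filter_subset _ _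

lemma commonNbhdIn_subset (W A : Finset V) : G.commonNbhdIn W A ⊆ W := filter_subset _ _

lemma card_nbhdIn_lt {W : Finset V} {v : V} (hv : v ∈ W) : #(G.nbhdIn W v) < #W :=
  card_lt_card (filter_ssubset.mpr ⟨v, hv, G.irrefl⟩)

lemma MinDegreeIn.lt_one {W : Finset V} {c : ℝ} (h : G.MinDegreeIn W c) {v : V} (hv : v ∈ W) :
    c < 1 := by
  have hlt : (#(G.nbhdIn W v) : ℝ) < #W := by exact_mod_cast card_nbhdIn_lt hv
  have hpos : (0 : ℝ) < #W := by exact_mod_cast card_pos.mpr ⟨v, hv⟩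
  by_contra! hc
  nlinarith [h v hv]

lemma card_nbhdIn_add_card_nbhdIn_le [DecidableEq V] (W : Finset V) (y w : V) :
    #(G.nbhdIn W w) + #(G.nbhdIn W y) ≤ #(G.nbhdIn (G.nbhdIn W y) w) + #W := by
  have hinter : G.nbhdIn (G.nbhdIn W y) w = G.nbhdIn W w ∩ G.nbhdIn W y := by
    ext x
    simp only [nbhdIn, mem_filter, mem_inter]
    tauto
  rw [hinter, ← card_union_add_card_inter, add_comm]
  gcongr
  exact union_subset (nbhdIn_subset W w) (nbhdIn_subset W y)

lemma MinDegreeIn.nbhdIn [DecidableEq V] {W : Finset V} {c c' : ℝ} (h : G.MinDegreeIn W c)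
    {y : V} (hy : y ∈ W) (hc' : c' ≤ 1) (hcc' : 1 - c ≤ (1 - c') * c) :
    G.MinDegreeIn (G.nbhdIn W y) c' := by
  intro w hw
  have hsum : (#(G.nbhdIn W w) + #(G.nbhdIn W y) : ℝ) ≤ #(G.nbhdIn (G.nbhdIn W y) w) + #W := by
    exact_mod_cast card_nbhdIn_add_card_nbhdIn_le W y w
  have hW : (0 : ℝ) ≤ #W := by positivity
  nlinarith [h w (nbhdIn_subset W y hw), mul_le_mul_of_nonneg_left (h y hy) (sub_nonneg.mpr hc'),
    mul_le_mul_of_nonneg_right hcc' hW]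

lemma MinDegreeIn.nbhdIn_of_succ [DecidableEq V] {W : Finset V} {q : ℕ} (hq : 3 ≤ q) {β : ℝ}
    (hβ : 0 ≤ β) (h : G.MinDegreeIn W (1 - 2 / (2 * q - 1) + β)) {y : V} (hy : y ∈ W) :
    G.MinDegreeIn (G.nbhdIn W y) (1 - 2 / (2 * q - 3) + β) := by
  have hq' : (3 : ℝ) ≤ q := by exact_mod_cast hq
  have hβa : β < 2 / (2 * q - 1) := by linarith [h.lt_one hy]
  have hab : 2 / (2 * q - 1) ≤ (2 / (2 * q - 3) : ℝ) := by gcongr <;> linarith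
  have hdiff : (2 / (2 * q - 3) : ℝ) - 2 / (2 * q - 1) = 2 / (2 * q - 3) * (2 / (2 * q - 1)) := by
    have : (2 * q - 1 : ℝ) ≠ 0 := by linarith
    have : (2 * q - 3 : ℝ) ≠ 0 := by linarith
    field_simp
    ring
  refine h.nbhdIn hy (by linarith) ?_
  nlinarith [mul_nonneg hβ (by linarith : (0 : ℝ) ≤ 2 / (2 * q - 1) + 2 / (2 * q - 3) - β)]

lemma sum_card_nbhdIn (W S : Finset V) :
    ∑ v ∈ S, #(G.nbhdIn W v) = ∑ x ∈ W, #{a ∈ S | G.Adj a x} :=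
  sum_card_bipartiteAbove_eq_sum_card_bipartiteBelow G.Adj

lemma sum_card_commonNbhdIn_powersetCard (W S : Finset V) (k : ℕ) :
    ∑ A ∈ S.powersetCard k, #(G.commonNbhdIn W A) =
      ∑ x ∈ W, (#{a ∈ S | G.Adj a x}).choose k := by
  refine (sum_card_bipartiteAbove_eq_sum_card_bipartiteBelow
    (fun A x => ∀ a ∈ A, G.Adj a x)).trans (sum_congr rfl fun x _ => ?_)
  rw [← card_powersetCard]
  congr 1
  ext A
  simp only [bipartiteBelow, mem_filter, mem_powersetCard, subset_iff]
  aesop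

lemma sum_card_nbhdIn_sub_le_sum_card_commonNbhdIn {W S : Finset V} {q : ℕ} (hq : 1 ≤ q)
    (hS : #S = q + 1) :
    ∑ v ∈ S, (#(G.nbhdIn W v) : ℝ) - (q - 1) * #W ≤
      ∑ A ∈ S.powersetCard q, (#(G.commonNbhdIn W A) : ℝ) := by
  have hdeg :
      ∑ v ∈ S, (#(G.nbhdIn W v) : ℝ) = ∑ x ∈ W, (#{a ∈ S | G.Adj a x} : ℝ) := by
    exact_mod_cast G.sum_card_nbhdIn W S
  have hcommon : ∑ A ∈ S.powersetCard q, (#(G.commonNbhdIn W A) : ℝ) =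
      ∑ x ∈ W, ((#{a ∈ S | G.Adj a x}).choose q : ℝ) := by
    exact_mod_cast G.sum_card_commonNbhdIn_powersetCard W S q
  rw [hdeg, hcommon, mul_comm, ← nsmul_eq_mul, ← sum_const, ← sum_sub_distrib]
  exact sum_le_sum fun x _ => sub_le_choose hq (hS ▸ card_filter_le _ _)

lemma exists_card_commonNbhdIn_ge {W S : Finset V} {q : ℕ} (hq : 1 ≤ q) (hS : #S = q + 1)
    {δ : ℝ} (hδ : ∀ v ∈ S, δ ≤ #(G.nbhdIn W v)) :
    ∃ A ∈ S.powersetCard q,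
      (q + 1) * δ - (q - 1) * #W ≤ (q + 1) * #(G.commonNbhdIn W A) := by
  refine exists_le_of_sum_le (powersetCard_nonempty.mpr (by omega)) ?_
  rw [sum_const, card_powersetCard, hS, Nat.choose_succ_self_right, ← mul_sum, nsmul_eq_mul]
  push_cast
  gcongr
  refine le_trans ?_ (sum_card_nbhdIn_sub_le_sum_card_commonNbhdIn hq hS)
  have := sum_le_sum hδ
  rw [sum_const, hS, nsmul_eq_mul] at this
  push_cast at this
  linarith

lemma exists_isNClique_card_commonNbhdIn_ge {W S : Finset V} {q : ℕ} (hq : 3 ≤ q) {β : ℝ}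
    (hβ : 0 ≤ β) (hW : G.MinDegreeIn W (1 - 2 / (2 * q - 1) + β)) (hSW : S ⊆ W)
    (hS : G.IsNClique (q + 1) S) :
    ∃ A ⊆ S, G.IsNClique q A ∧
      (2 * q - 4 : ℝ) / ((q + 1) * (2 * q - 1)) * #W ≤ #(G.commonNbhdIn W A) := by
  obtain ⟨A, hA, hAY⟩ :=
    exists_card_commonNbhdIn_ge (by omega) hS.card_eq fun v hv => hW v (hSW hv)
  obtain ⟨hAS, hAcard⟩ := mem_powersetCard.mp hA
  refine ⟨A, hAS, ⟨hS.isClique.subset (by exact_mod_cast hAS), hAcard⟩, ?_⟩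
  have hq' : (3 : ℝ) ≤ q := by exact_mod_cast hq
  have hη : (q + 1) * ((2 * q - 4) / ((q + 1) * (2 * q - 1))) =
      (q + 1) * (1 - 2 / (2 * q - 1)) - (q - 1 : ℝ) := by
    have h1 : (2 * q - 1 : ℝ) ≠ 0 := by linarith
    have h2 : (q + 1 : ℝ) ≠ 0 := by linarith
    rw [mul_div_assoc', mul_div_mul_left _ _ h2, one_sub_div h1]
    field_simp
    ring
  have hβW : (0 : ℝ) ≤ (q + 1) * (β * #W) := by positivity
  rw [← mul_le_mul_iff_right₀ (by positivity : (0 : ℝ) < q + 1), ← mul_assoc, hη]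
  nlinarith

end NeighbourhoodsIn

section CliquesIn

variable {V : Type*} [Fintype V] [DecidableEq V] (G : SimpleGraph V) [DecidableRel G.Adj]

def pairCliqueCount (W : Finset V) (q : ℕ) (u v : V) : ℕ :=
  #{T ∈ G.cliqueFinset q | T ⊆ W ∧ u ∈ T ∧ v ∈ T}

variable {G}

lemma card_commonNbhdIn_le_pairCliqueCount {W A : Finset V} {q : ℕ} (hA : G.IsNClique q A)
    (hAW : A ⊆ W) {u v : V} (hu : u ∈ A) (hv : v ∈ A) :
    #(G.commonNbhdIn W A) ≤ G.pairCliqueCount W (q + 1) u v := by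
  have hnot : ∀ x ∈ G.commonNbhdIn W A, x ∉ A := fun x hx hxA =>
    G.irrefl ((mem_commonNbhdIn.mp hx).2 x hxA)
  refine card_le_card_of_injOn (insert · A) (fun x hx => ?_) fun x hx x' _ h => ?_
  · obtain ⟨hxW, hxA⟩ := mem_commonNbhdIn.mp hx
    simp only [coe_filter, Set.mem_ofPred_eq, mem_cliqueFinset_iff]
    exact ⟨hA.insert fun b hb => (hxA b hb).symm, insert_subset hxW hAW, mem_insert_of_mem hu,
      mem_insert_of_mem hv⟩
  · exact (insert_inj (hnot x hx)).mp h

lemma sum_pairCliqueCount_nbhdIn_le {W Y : Finset V} (hYW : Y ⊆ W) {q : ℕ} {u v : V}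
    (huv : u ≠ v) :
    ∑ y ∈ Y, G.pairCliqueCount (G.nbhdIn W y) q u v ≤
      (q - 1) * G.pairCliqueCount W (q + 1) u v := by
  set 𝒯 := {T ∈ G.cliqueFinset (q + 1) | T ⊆ W ∧ u ∈ T ∧ v ∈ T} with h𝒯
  have hfibre : ∀ T ∈ 𝒯, #((T.erase u).erase v) = q - 1 := fun T hT => by
    obtain ⟨hT, -, hu, hv⟩ := mem_filter.mp hT
    rw [card_erase_of_mem (mem_erase.mpr ⟨huv.symm, hv⟩), card_erase_of_mem hu,
      (mem_cliqueFinset_iff.mp hT).card_eq]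
    omega
  have hnot : ∀ y T, T ⊆ G.nbhdIn W y → y ∉ T := fun y T hT hy =>
    G.irrefl (mem_nbhdIn.mp (hT hy)).2
  simp only [pairCliqueCount]
  rw [← card_sigma]
  calc _ ≤ #(𝒯.sigma fun T => (T.erase u).erase v) := by
        refine card_le_card_of_injOn (fun x => ⟨insert x.1 x.2, x.1⟩) ?_ ?_
        · rintro ⟨y, T⟩ hyT
          simp only [h𝒯, coe_sigma, Set.mem_sigma_iff, mem_coe, mem_filter, mem_cliqueFinset_iff]
            at hyT ⊢
          obtain ⟨hy, hT, hTW, hu, hv⟩ := hyT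
          have hadj : ∀ b ∈ T, G.Adj y b := fun b hb => (mem_nbhdIn.mp (hTW hb)).2
          exact ⟨⟨hT.insert hadj, insert_subset (hYW hy) (hTW.trans (nbhdIn_subset W y)),
            mem_insert_of_mem hu, mem_insert_of_mem hv⟩,
            mem_erase.mpr ⟨(hadj v hv).ne,
              mem_erase.mpr ⟨(hadj u hu).ne, mem_insert_self y T⟩⟩⟩
        · rintro ⟨y, T⟩ hyT ⟨y', T'⟩ hyT' h
          simp only [Sigma.mk.injEq] at h
          obtain ⟨hins, rfl⟩ := h
          simp only [coe_sigma, Set.mem_sigma_iff, mem_coe, mem_filter] at hyT hyT'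
          rw [← erase_insert (hnot y T hyT.2.2.1), hins, erase_insert (hnot y T' hyT'.2.2.1)]
    _ = (q - 1) * #𝒯 := by
        rw [card_sigma, sum_congr rfl hfibre, sum_const, smul_eq_mul, mul_comm]

lemma sum_sum_pairCliqueCount_nbhdIn_le {W Y A : Finset V} (hYW : Y ⊆ W) {q : ℕ}
    (hq : 1 ≤ q) :
    ∑ y ∈ Y, ∑ z ∈ A.offDiag, (G.pairCliqueCount (G.nbhdIn W y) q z.1 z.2 : ℝ) ≤
      (q - 1) * ∑ z ∈ A.offDiag, (G.pairCliqueCount W (q + 1) z.1 z.2 : ℝ) := by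
  rw [sum_comm, mul_sum]
  refine sum_le_sum fun z hz => ?_
  rw [← Nat.cast_pred hq]
  exact_mod_cast sum_pairCliqueCount_nbhdIn_le hYW (mem_offDiag.mp hz).2.2

lemma le_sum_pairCliqueCount_three {W S : Finset V} {β : ℝ} (hW : G.MinDegreeIn W (1 / 3 + β))
    (hSW : S ⊆ W) (hS : G.IsNClique 3 S) :
    β * #W ≤ ∑ z ∈ S.offDiag, (G.pairCliqueCount W 3 z.1 z.2 : ℝ) := by
  obtain ⟨A, hA, hAY⟩ := exists_card_commonNbhdIn_ge (q := 2) (by norm_num) hS.card_eq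
    fun v hv => hW v (hSW hv)
  obtain ⟨hAS, hAcard⟩ := mem_powersetCard.mp hA
  obtain ⟨u, v, huv, rfl⟩ := card_eq_two.mp hAcard
  have hA : G.IsNClique 2 {u, v} := ⟨hS.isClique.subset (by exact_mod_cast hAS), hAcard⟩
  have huvS : (u, v) ∈ S.offDiag := mem_offDiag.mpr ⟨hAS (by simp), hAS (by simp), huv⟩
  calc β * #W ≤ #(G.commonNbhdIn W {u, v}) := by
        push_cast at hAY
        linarith
    _ ≤ (G.pairCliqueCount W 3 u v : ℝ) := by
        exact_mod_cast card_commonNbhdIn_le_pairCliqueCount hA (hAS.trans hSW) (by simp) (by simp)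
    _ ≤ _ := (single_le_sum (f := fun z : V × V => (G.pairCliqueCount W 3 z.1 z.2 : ℝ))
        (fun _ _ => Nat.cast_nonneg _) huvS :)

lemma le_sum_pairCliqueCount_succ {q : ℕ} (hq : 3 ≤ q) {β : ℝ} (hβ : 0 ≤ β)
    (ih : ∀ {W S : Finset V}, G.MinDegreeIn W (1 - 2 / (2 * q - 3) + β) → S ⊆ W →
      G.IsNClique q S →
        cliqueConst q * β * #W ^ (q - 2) ≤
          ∑ z ∈ S.offDiag, (G.pairCliqueCount W q z.1 z.2 : ℝ))
    {W S : Finset V} (hW : G.MinDegreeIn W (1 - 2 / (2 * q - 1) + β)) (hSW : S ⊆ W)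
    (hS : G.IsNClique (q + 1) S) :
    cliqueConst (q + 1) * β * #W ^ (q - 1) ≤
      ∑ z ∈ S.offDiag, (G.pairCliqueCount W (q + 1) z.1 z.2 : ℝ) := by
  have hq' : (3 : ℝ) ≤ q := by exact_mod_cast hq
  have hc := (cliqueConst_pos (by omega : 2 ≤ q)).le
  have hconst := cliqueConst_succ_le hq
  set κ : ℝ := 1 - 2 / (2 * q - 1)
  have hκ : 0 ≤ κ := by
    rw [sub_nonneg, div_le_one (by linarith)]
    linarith
  obtain ⟨A, hAS, hA, hAY⟩ := exists_isNClique_card_commonNbhdIn_ge hq hβ hW hSW hS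
  set Y := G.commonNbhdIn W A
  have hlocal : ∀ y ∈ Y, cliqueConst q * β * (κ * #W) ^ (q - 2) ≤
      ∑ z ∈ A.offDiag, (G.pairCliqueCount (G.nbhdIn W y) q z.1 z.2 : ℝ) := fun y hy => by
    obtain ⟨hyW, hyA⟩ := mem_commonNbhdIn.mp hy
    refine le_trans ?_ (ih (hW.nbhdIn_of_succ hq hβ hyW)
      (fun a ha => mem_nbhdIn.mpr ⟨hSW (hAS ha), (hyA a ha).symm⟩) hA)
    have : κ * #W ≤ #(G.nbhdIn W y) := le_trans (by gcongr; linarith) (hW y hyW)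
    gcongr
  rw [← mul_le_mul_iff_right₀ (by linarith : (0 : ℝ) < q - 1)]
  calc (q - 1) * (cliqueConst (q + 1) * β * #W ^ (q - 1))
      = (q - 1) * cliqueConst (q + 1) * (β * #W ^ (q - 1)) := by ring
    _ ≤ (2 * q - 4) / ((q + 1) * (2 * q - 1)) * κ ^ (q - 2) * cliqueConst q *
        (β * #W ^ (q - 1)) := by gcongr
    _ = (2 * q - 4) / ((q + 1) * (2 * q - 1)) * #W *
        (cliqueConst q * β * (κ * #W) ^ (q - 2)) := by
        rw [mul_pow, show q - 1 = q - 2 + 1 by omega, pow_succ]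
        ring
    _ ≤ #Y * (cliqueConst q * β * (κ * #W) ^ (q - 2)) := by gcongr
    _ ≤ ∑ y ∈ Y, ∑ z ∈ A.offDiag, (G.pairCliqueCount (G.nbhdIn W y) q z.1 z.2 : ℝ) := by
        rw [← nsmul_eq_mul, ← sum_const]
        exact sum_le_sum hlocal
    _ ≤ (q - 1) * ∑ z ∈ A.offDiag, (G.pairCliqueCount W (q + 1) z.1 z.2 : ℝ) :=
        sum_sum_pairCliqueCount_nbhdIn_le (commonNbhdIn_subset W A) (by omega)
    _ ≤ (q - 1) * ∑ z ∈ S.offDiag, (G.pairCliqueCount W (q + 1) z.1 z.2 : ℝ) := by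
        gcongr
        linarith

theorem cliqueConst_mul_le_sum_pairCliqueCount {q : ℕ} (hq : 3 ≤ q) {β : ℝ} (hβ : 0 ≤ β)
    {W S : Finset V} (hW : G.MinDegreeIn W (1 - 2 / (2 * q - 3) + β)) (hSW : S ⊆ W)
    (hS : G.IsNClique q S) :
    cliqueConst q * β * #W ^ (q - 2) ≤
      ∑ z ∈ S.offDiag, (G.pairCliqueCount W q z.1 z.2 : ℝ) := by
  induction q, hq using Nat.le_induction generalizing W S with
  | base =>
    have hW3 : G.MinDegreeIn W (1 / 3 + β) := by
      convert hW using 2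
      norm_num
    calc cliqueConst 3 * β * #W ^ (3 - 2) ≤ β * #W := by
          rw [mul_assoc, pow_one]
          exact mul_le_of_le_one_left (by positivity) cliqueConst_three_le_one
      _ ≤ _ := le_sum_pairCliqueCount_three hW3 hSW hS
  | succ q hq ih =>
    have hW' : G.MinDegreeIn W (1 - 2 / (2 * q - 1) + β) := by
      convert hW using 4
      push_cast
      ring
    simpa using le_sum_pairCliqueCount_succ hq hβ ih hW' hSW hS

theorem exists_mem_offDiag_le_pairCliqueCount {p : ℕ} (hp : 3 ≤ p) {β : ℝ} (hβ : 0 ≤ β)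
    (hW : G.MinDegreeIn univ (1 - 2 / (2 * p - 3) + β)) {S : Finset V} (hS : G.IsNClique p S) :
    ∃ z ∈ S.offDiag, cliqueConst p * β * Fintype.card V ^ (p - 2) / (p * (p - 1)) ≤
      G.pairCliqueCount univ p z.1 z.2 := by
  have hp' : (3 : ℝ) ≤ p := by exact_mod_cast hp
  refine exists_le_of_sum_le (card_pos.mp ?_) ?_
  · rw [offDiag_card, hS.card_eq]
    exact Nat.sub_pos_of_lt (by nlinarith)
  · rw [sum_const, nsmul_eq_mul, cast_card_offDiag, hS.card_eq, mul_div_cancel₀ _ (by nlinarith)]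
    simpa using cliqueConst_mul_le_sum_pairCliqueCount hp hβ hW (subset_univ S) hS

lemma sum_offDiag_pairCliqueCount_univ (p : ℕ) :
    ∑ z ∈ (univ : Finset V).offDiag, (G.pairCliqueCount univ p z.1 z.2 : ℝ) =
      #(G.cliqueFinset p) * (p * (p - 1)) := by
  have hcount : ∑ z ∈ (univ : Finset V).offDiag, G.pairCliqueCount univ p z.1 z.2 =
      ∑ T ∈ G.cliqueFinset p, #T.offDiag := by
    simp only [pairCliqueCount, card_filter]
    rw [sum_comm]
    refine sum_congr rfl fun T _ => ?_
    rw [← card_filter]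
    congr 1
    ext z
    simp only [mem_filter, mem_offDiag, mem_univ, subset_univ, true_and]
    tauto
  rw [← Nat.cast_sum, hcount, Nat.cast_sum, sum_congr rfl fun T hT => by
    rw [cast_card_offDiag, (mem_cliqueFinset_iff.mp hT).card_eq], sum_const, nsmul_eq_mul]

theorem exists_deleteEdges_cliqueFree {p : ℕ} {Q : ℝ} (hQ : 0 ≤ Q)
    (hrich : ∀ S, G.IsNClique p S →
      ∃ z ∈ S.offDiag, Q ≤ G.pairCliqueCount univ p z.1 z.2) :
    ∃ E ⊆ G.edgeSet, Q * E.ncard ≤ #(G.cliqueFinset p) * (p * (p - 1)) ∧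
      (G.deleteEdges E).CliqueFree p := by
  set R := {z ∈ (univ : Finset V).offDiag | Q ≤ G.pairCliqueCount univ p z.1 z.2}
  refine ⟨G.edgeSet ∩ R.image (fun z => s(z.1, z.2)), Set.inter_subset_left, ?_, ?_⟩
  · calc Q * (G.edgeSet ∩ R.image (fun z => s(z.1, z.2))).ncard ≤ Q * #R := by
          gcongr
          exact_mod_cast (Set.ncard_le_ncard Set.inter_subset_right (finite_toSet _)).trans
            ((Set.ncard_coe_finset _).trans_le card_image_le)
      _ ≤ ∑ z ∈ R, (G.pairCliqueCount univ p z.1 z.2 : ℝ) := by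
          rw [mul_comm, ← nsmul_eq_mul, ← sum_const]
          exact sum_le_sum fun z hz => (mem_filter.mp hz).2
      _ ≤ ∑ z ∈ (univ : Finset V).offDiag, (G.pairCliqueCount univ p z.1 z.2 : ℝ) :=
          sum_le_sum_of_subset_of_nonneg (filter_subset _ _) fun _ _ _ => Nat.cast_nonneg _
      _ = _ := sum_offDiag_pairCliqueCount_univ p
  · intro S hS
    obtain ⟨z, hz, hQz⟩ := hrich S (hS.mono (deleteEdges_le _))
    obtain ⟨h1, h2, hne⟩ := mem_offDiag.mp hz
    have hadj := hS.isClique h1 h2 hne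
    rw [deleteEdges_adj] at hadj
    exact hadj.2 ⟨hadj.1, mem_image_of_mem _
      (mem_filter.mpr ⟨mem_offDiag.mpr ⟨mem_univ _, mem_univ _, hne⟩, hQz⟩)⟩

end CliquesIn

end SimpleGraph

lemma degCount_eq_card_nbhdIn {V : Type*} [Fintype V] (G : SimpleGraph V) [DecidableRel G.Adj]
    (v : V) : degCount G v = #(G.nbhdIn univ v) := by
  rw [degCount, Set.ncard_eq_toFinset_card', ← neighborFinset_def, neighborFinset_eq_filter]
  rfl

lemma cliqueCount_eq_card_cliqueFinset {V : Type*} [Fintype V] [DecidableEq V]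
    (G : SimpleGraph V) [DecidableRel G.Adj] (p : ℕ) :
    cliqueCount G p = #(G.cliqueFinset p) := by
  rw [cliqueCount, ← Set.ncard_coe_finset, coe_cliqueFinset]
  rfl

theorem high_min_degree_removal_general (p : ℕ) (hp : 3 ≤ p) (β lam : ℝ) (hβ : 0 < β)
    (m : ℕ) (Γ : SimpleGraph (Fin m))
    (hdeg : ∀ v, (1 - 2 / (2 * (p : ℝ) - 3) + β) * m ≤ (degCount Γ v : ℝ))
    (hcliques : (cliqueCount Γ p : ℝ) ≤ ((10 * (p : ℝ)) ^ (2 * p))⁻¹ * β * lam * (m : ℝ) ^ p) :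
    ∃ E : Set (Sym2 (Fin m)), E ⊆ Γ.edgeSet ∧ (E.ncard : ℝ) ≤ lam * (m : ℝ) ^ 2 ∧
      (Γ.deleteEdges E).CliqueFree p := by
  classical
  obtain rfl | hm := m.eq_zero_or_pos
  · exact ⟨∅, Set.empty_subset _, by simp, cliqueFree_of_card_lt (by simp; omega)⟩
  have hp' : (3 : ℝ) ≤ p := by exact_mod_cast hp
  have hW : Γ.MinDegreeIn univ (1 - 2 / (2 * p - 3) + β) := fun v _ => by
    simpa [← degCount_eq_card_nbhdIn] using hdeg v
  set Q : ℝ := cliqueConst p * β * m ^ (p - 2) / (p * (p - 1))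
  have hQ : 0 < Q := by
    have : (0 : ℝ) < p * (p - 1) := by nlinarith
    have := cliqueConst_pos (by omega : 2 ≤ p)
    positivity
  obtain ⟨E, hE, hcard, hfree⟩ := Γ.exists_deleteEdges_cliqueFree hQ.le fun S hS => by
    simpa using Γ.exists_mem_offDiag_le_pairCliqueCount hp hβ.le hW hS
  refine ⟨E, hE, le_of_mul_le_mul_left ?_ hQ, hfree⟩
  calc Q * E.ncard ≤ #(Γ.cliqueFinset p) * (p * (p - 1)) := hcard
    _ ≤ ((10 * (p : ℝ)) ^ (2 * p))⁻¹ * β * lam * m ^ p * (p * (p - 1)) := by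
        rw [← cliqueCount_eq_card_cliqueFinset]
        gcongr
        nlinarith
    _ = Q * (lam * m ^ 2) := by
        have : (p : ℝ) * (p - 1) ≠ 0 := by nlinarith
        rw [← pow_sub_mul_pow (m : ℝ) (by omega : 2 ≤ p)]
        simp only [Q, cliqueConst]
        field_simp

theorem high_min_degree_removal (p : ℕ) (hp : 3 ≤ p) (β lam : ℝ) (hβ : 0 < β) (hlam : 0 < lam)
    (m : ℕ) (Γ : SimpleGraph (Fin m))
    (hdeg : ∀ v, (1 - 2 / (2 * (p : ℝ) - 3) + β) * m ≤ (degCount Γ v : ℝ))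
    (hcliques : (cliqueCount Γ p : ℝ) ≤ ((10 * (p : ℝ)) ^ (2 * p))⁻¹ * β * lam * (m : ℝ) ^ p) :
    ∃ E : Set (Sym2 (Fin m)), E ⊆ Γ.edgeSet ∧ (E.ncard : ℝ) ≤ lam * (m : ℝ) ^ 2 ∧
      (Γ.deleteEdges E).CliqueFree p :=
  high_min_degree_removal_general p hp β lam hβ m Γ hdeg hcliques
end

section
/- Let p ≥ 3 be an integer and β > 0 a real, and let Γ be a graph on m vertices with minimum degree at least (1 − 2/(2p−3) + β)·m. Then every copy of K_p in Γ contains an edge that lies in at least β·(m/(8p))^(p−2) copies of K_p. -/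
open SimpleGraph

/-!
We bound from below, by induction on `p`, the total number `T(A, s)` of `p`-cliques inside a
vertex set `A` through the edges of a `p`-clique `s ⊆ A`, assuming every vertex of `A` has at
least `(1 - 2/(2p-3) + β)|A|` neighbours in `A`: `(p-2) T(A, s) ≥ 3β (|A|/(2p-3))^(p-2)`.

Let `s` be a `(p+1)`-clique and `X` the set of vertices of `A` adjacent to at least `p` vertices
of `s`. Double counting the edges between `s` and `A` gives `|X| ≥ (p-2)|A|/(2p-1)` (and
`|X| ≥ 3β|A|/2` when `p = 2`). Each `w ∈ X` sees a `p`-clique of `s` inside its neighbourhood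
`N(w) ∩ A`, which has at least `(2p-3)|A|/(2p-1)` vertices and in which the degree condition holds
with `2/(2p-3)` in place of `2/(2p-1)`: these deficiencies `a` and `b` satisfy `1/a = 1/b + 1`,
which is exactly what losing the `|A| - |N(w) ∩ A|` vertices outside the neighbourhood costs.
So the induction hypothesis applies in `N(w) ∩ A`, and adding `w` to the `p`-cliques found there
gives `(p+1)`-cliques through the same edge, each at most `p - 1` times.

At the end, some edge of `s` carries at least the average `T(V, s) / C(p, 2)`.
-/

open Finset

lemma Finset.exists_erase_subset_filter {α : Type*} [DecidableEq α] {s : Finset α} {k : ℕ}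
    (P : α → Prop) [DecidablePred P] (hs : #s = k + 1) (hk : k ≤ #{u ∈ s | P u}) :
    ∃ z ∈ s, s.erase z ⊆ {u ∈ s | P u} := by
  by_cases hP : ∀ u ∈ s, P u
  · obtain ⟨z, hz⟩ : s.Nonempty := card_pos.1 (by omega)
    exact ⟨z, hz, fun u hu => mem_filter.2 ⟨mem_of_mem_erase hu, hP u (mem_of_mem_erase hu)⟩⟩
  · push Not at hP
    obtain ⟨z, hz, hPz⟩ := hP
    refine ⟨z, hz, (eq_of_subset_of_card_le (fun u hu => ?_) ?_).ge⟩
    · exact mem_erase.2 ⟨fun h => hPz (h ▸ (mem_filter.1 hu).2), (mem_filter.1 hu).1⟩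
    · rw [card_erase_of_mem hz, hs]
      omega

lemma Finset.sum_le_mul_card_add_two_mul_card_filter {ι : Type*} {A : Finset ι} {f : ι → ℕ}
    {k : ℕ} (hf : ∀ i ∈ A, f i ≤ k + 2) :
    ∑ i ∈ A, f i ≤ k * #A + 2 * #{i ∈ A | k + 1 ≤ f i} := by
  calc ∑ i ∈ A, f i ≤ ∑ i ∈ A, (k + 2 * if k + 1 ≤ f i then 1 else 0) :=
        sum_le_sum fun i hi => by have := hf i hi; split_ifs <;> omega
    _ = k * #A + 2 * #{i ∈ A | k + 1 ≤ f i} := by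
        rw [sum_add_distrib, sum_const, smul_eq_mul, ← mul_sum, card_filter, mul_comm]

lemma sub_mul_le_sub_mul_of_mul_one_sub_eq {a b β M N : ℝ} (hab : b * (1 - a) = a)
    (ha : 0 ≤ a) (hab' : a ≤ b) (hβ : 0 ≤ β) (hM : 0 ≤ M) (hN : (1 - a + β) * M ≤ N)
    (hNM : N ≤ M) :
    (a - β) * M ≤ (b - β) * N := by
  rcases le_total β b with hβb | hbβ
  · nlinarith [mul_le_mul_of_nonneg_left hN (sub_nonneg.2 hβb),
      mul_nonneg (mul_nonneg hβ (by linarith : 0 ≤ a + b - β)) hM]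
  · nlinarith [mul_le_mul_of_nonpos_left hNM (sub_nonpos.2 hbβ)]

lemma choose_two_mul_le_of_three_mul_pow_le {β M T : ℝ} (hβ : 0 ≤ β) (hM : 0 ≤ M) (n : ℕ)
    (hT : 3 * β * (M / (2 * n + 3)) ^ (n + 1) ≤ (n + 1) * T) :
    (n + 3).choose 2 * (β * (M / (8 * ((n + 3 : ℕ) : ℝ))) ^ (n + 1)) ≤ T := by
  have hcube : ∀ k : ℕ, (k + 1) * (k + 2) * (k + 3) ≤ 6 * 4 ^ (k + 1) := by
    intro k
    induction k with
    | zero => norm_num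
    | succ k ih => rw [pow_succ]; nlinarith [Nat.zero_le (k * (k + 2) * (k + 3))]
  have hcoef : (n + 1) * ((n + 3).choose 2 : ℝ) ≤ 3 * 4 ^ (n + 1) := by
    have : ((n + 1) * (n + 2) * (n + 3) : ℝ) ≤ 6 * 4 ^ (n + 1) := by exact_mod_cast hcube n
    rw [Nat.cast_choose_two]
    push_cast
    linarith
  have hx : 4 * (M / (8 * ((n + 3 : ℕ) : ℝ))) ≤ M / (2 * n + 3) := by
    rw [mul_div_assoc', div_le_div_iff₀ (by positivity) (by positivity)]
    push_cast
    nlinarith [Nat.cast_nonneg (α := ℝ) n]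
  refine le_of_mul_le_mul_left ?_ (by positivity : (0 : ℝ) < n + 1)
  calc (n + 1) * ((n + 3).choose 2 * (β * (M / (8 * ((n + 3 : ℕ) : ℝ))) ^ (n + 1)))
      = β * ((n + 1) * (n + 3).choose 2 * (M / (8 * ((n + 3 : ℕ) : ℝ))) ^ (n + 1)) := by ring
    _ ≤ β * (3 * 4 ^ (n + 1) * (M / (8 * ((n + 3 : ℕ) : ℝ))) ^ (n + 1)) := by gcongr
    _ = 3 * β * (4 * (M / (8 * ((n + 3 : ℕ) : ℝ)))) ^ (n + 1) := by rw [mul_pow]; ring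
    _ ≤ 3 * β * (M / (2 * n + 3)) ^ (n + 1) := by gcongr
    _ ≤ (n + 1) * T := hT

namespace SimpleGraph

section Density

variable {V : Type*} {G : SimpleGraph V} [DecidableRel G.Adj]

def IsDenseOn (G : SimpleGraph V) [DecidableRel G.Adj] (A : Finset V) (δ : ℝ) : Prop :=
  ∀ v ∈ A, δ * #A ≤ #{u ∈ A | G.Adj v u}

lemma isDenseOn_univ_of_le_degCount [Fintype V] {δ : ℝ}
    (h : ∀ v, δ * Fintype.card V ≤ degCount G v) : G.IsDenseOn univ δ := fun v _ => by
  have hv : degCount G v = #{u ∈ univ | G.Adj v u} := by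
    rw [degCount, ← Set.ncard_coe_finset]
    congr 1
    ext u
    simp
  rw [card_univ, ← hv]
  exact h v

lemma mul_le_mul_card_add_two_mul_card_filter {k : ℕ} {A s : Finset V} {d : ℝ} (hs : #s = k + 2)
    (hd : ∀ u ∈ s, d ≤ #{v ∈ A | G.Adj u v}) :
    (k + 2) * d ≤ k * #A + 2 * #{w ∈ A | k + 1 ≤ #{u ∈ s | G.Adj w u}} := by
  have hcount : ∑ u ∈ s, #{v ∈ A | G.Adj u v} = ∑ w ∈ A, #{u ∈ s | G.Adj w u} := by
    refine (sum_card_bipartiteAbove_eq_sum_card_bipartiteBelow G.Adj).trans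
      (sum_congr rfl fun w _ => ?_)
    simp_rw [bipartiteBelow, G.adj_comm _ w]
  have hsum := sum_le_mul_card_add_two_mul_card_filter (A := A) (k := k)
    (f := fun w => #{u ∈ s | G.Adj w u}) fun w _ => hs ▸ card_filter_le _ _
  calc (k + 2) * d = ∑ _u ∈ s, d := by rw [sum_const, hs, nsmul_eq_mul]; push_cast; ring
    _ ≤ ∑ u ∈ s, (#{v ∈ A | G.Adj u v} : ℝ) := sum_le_sum hd
    _ ≤ k * #A + 2 * #{w ∈ A | k + 1 ≤ #{u ∈ s | G.Adj w u}} := by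
        exact_mod_cast hcount ▸ hsum

lemma IsDenseOn.filter_adj [DecidableEq V] {a b β : ℝ} {A : Finset V} {w : V}
    (hab : b * (1 - a) = a) (ha : 0 ≤ a) (hab' : a ≤ b) (hβ : 0 ≤ β)
    (hA : G.IsDenseOn A (1 - a + β)) (hw : w ∈ A) :
    G.IsDenseOn {u ∈ A | G.Adj w u} (1 - b + β) := by
  intro v hv
  have hinter : #{u ∈ A | G.Adj v u} + #{u ∈ A | G.Adj w u} ≤
      #A + #{u ∈ {u ∈ A | G.Adj w u} | G.Adj v u} := by
    rw [filter_filter, filter_and, inter_comm, ← card_union_add_card_inter]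
    exact Nat.add_le_add_right
      (card_le_card (union_subset (filter_subset _ _) (filter_subset _ _))) _
  have hinter' : (#{u ∈ A | G.Adj v u} : ℝ) + #{u ∈ A | G.Adj w u} ≤
      #A + #{u ∈ {u ∈ A | G.Adj w u} | G.Adj v u} := by exact_mod_cast hinter
  have hstep := sub_mul_le_sub_mul_of_mul_one_sub_eq hab ha hab' hβ (Nat.cast_nonneg #A)
    (hA w hw) (by exact_mod_cast card_filter_le A _)
  linarith [hA v (mem_filter.1 hv).1]

end Density

section CliquesThroughEdges

variable {V : Type*} [DecidableEq V] (G : SimpleGraph V) [DecidableRel G.Adj]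

def cliquesThrough (p : ℕ) (A e : Finset V) : Finset (Finset V) :=
  {q ∈ A.powersetCard p | G.IsNClique p q ∧ e ⊆ q}

def edgeCliqueCount (p : ℕ) (A s : Finset V) : ℕ :=
  ∑ e ∈ s.powersetCard 2, #(G.cliquesThrough p A e)

variable {G}

lemma mem_cliquesThrough {p : ℕ} {A e q : Finset V} :
    q ∈ G.cliquesThrough p A e ↔ q ⊆ A ∧ G.IsNClique p q ∧ e ⊆ q := by
  rw [cliquesThrough, mem_filter, mem_powersetCard]
  exact ⟨fun ⟨⟨hqA, _⟩, hq, he⟩ => ⟨hqA, hq, he⟩, fun ⟨hqA, hq, he⟩ => ⟨⟨hqA, hq.2⟩, hq, he⟩⟩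

lemma choose_two_le_edgeCliqueCount {p : ℕ} {A s : Finset V} (hs : G.IsNClique p s)
    (hsA : s ⊆ A) : p.choose 2 ≤ G.edgeCliqueCount p A s := by
  calc p.choose 2 = ∑ _e ∈ s.powersetCard 2, 1 := by
        rw [sum_const, smul_eq_mul, mul_one, card_powersetCard, hs.2]
    _ ≤ G.edgeCliqueCount p A s := sum_le_sum fun e he =>
        card_pos.2 ⟨s, mem_cliquesThrough.2 ⟨hsA, hs, (mem_powersetCard.1 he).1⟩⟩

lemma card_cliquesThrough_filter_adj_le {p : ℕ} {A e : Finset V} {w : V} (hw : w ∈ A) :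
    #(G.cliquesThrough p {u ∈ A | G.Adj w u} e) ≤
      #{Q ∈ G.cliquesThrough (p + 1) A e | w ∈ Q \ e} := by
  have hwq : ∀ q ∈ G.cliquesThrough p {u ∈ A | G.Adj w u} e, w ∉ q := fun q hq hw =>
    G.irrefl (mem_filter.1 ((mem_cliquesThrough.1 hq).1 hw)).2
  refine card_le_card_of_injOn (insert w) (fun q hq => ?_) fun q hq q' hq' h => ?_
  · obtain ⟨hqA, hqc, heq⟩ := mem_cliquesThrough.1 hq
    have hadj : ∀ u ∈ q, G.Adj w u := fun u hu => (mem_filter.1 (hqA hu)).2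
    refine mem_filter.2 ⟨mem_cliquesThrough.2 ⟨?_, hqc.insert hadj, heq.trans (subset_insert _ _)⟩,
      mem_sdiff.2 ⟨mem_insert_self _ _, fun hwe => hwq q hq (heq hwe)⟩⟩
    exact insert_subset hw (hqA.trans (filter_subset _ _))
  · rw [← erase_insert (hwq q hq), ← erase_insert (hwq q' hq'), h]

lemma sum_card_cliquesThrough_filter_adj_le {p : ℕ} {A e : Finset V} (he : #e = 2) :
    ∑ w ∈ A, #(G.cliquesThrough p {u ∈ A | G.Adj w u} e) ≤
      (p - 1) * #(G.cliquesThrough (p + 1) A e) := by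
  calc ∑ w ∈ A, #(G.cliquesThrough p {u ∈ A | G.Adj w u} e)
      ≤ ∑ w ∈ A, #{Q ∈ G.cliquesThrough (p + 1) A e | w ∈ Q \ e} :=
        sum_le_sum fun w hw => card_cliquesThrough_filter_adj_le hw
    _ = ∑ Q ∈ G.cliquesThrough (p + 1) A e, #{w ∈ A | w ∈ Q \ e} :=
        sum_card_bipartiteAbove_eq_sum_card_bipartiteBelow _
    _ = ∑ _Q ∈ G.cliquesThrough (p + 1) A e, (p - 1) := sum_congr rfl fun Q hQ => by
        obtain ⟨hQA, hQ, heQ⟩ := mem_cliquesThrough.1 hQ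
        rw [filter_mem_eq_inter, inter_eq_right.2 (sdiff_subset.trans hQA),
          card_sdiff_of_subset heQ, hQ.2, he]
        omega
    _ = (p - 1) * #(G.cliquesThrough (p + 1) A e) := by rw [sum_const, smul_eq_mul, mul_comm]

lemma sum_edgeCliqueCount_filter_adj_le {p : ℕ} {A s W : Finset V} {t : V → Finset V} (hWA : W ⊆ A)
    (ht : ∀ w ∈ W, t w ⊆ s) :
    ∑ w ∈ W, G.edgeCliqueCount p {u ∈ A | G.Adj w u} (t w) ≤
      (p - 1) * G.edgeCliqueCount (p + 1) A s := by
  calc ∑ w ∈ W, G.edgeCliqueCount p {u ∈ A | G.Adj w u} (t w)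
      ≤ ∑ w ∈ A, ∑ e ∈ s.powersetCard 2, #(G.cliquesThrough p {u ∈ A | G.Adj w u} e) :=
        (sum_le_sum fun w hw => sum_le_sum_of_subset (powersetCard_mono (ht w hw))).trans
          (sum_le_sum_of_subset hWA)
    _ = ∑ e ∈ s.powersetCard 2, ∑ w ∈ A, #(G.cliquesThrough p {u ∈ A | G.Adj w u} e) := sum_comm
    _ ≤ ∑ e ∈ s.powersetCard 2, (p - 1) * #(G.cliquesThrough (p + 1) A e) :=
        sum_le_sum fun e he => sum_card_cliquesThrough_filter_adj_le (mem_powersetCard.1 he).2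
    _ = (p - 1) * G.edgeCliqueCount (p + 1) A s := (mul_sum _ _ _).symm

lemma card_mul_le_edgeCliqueCount {p : ℕ} {A s : Finset V} {L : ℝ} (hs : G.IsNClique (p + 1) s)
    (hsA : s ⊆ A) (hL : ∀ w ∈ A, ∀ t, G.IsNClique p t → t ⊆ {u ∈ A | G.Adj w u} →
      L ≤ G.edgeCliqueCount p {u ∈ A | G.Adj w u} t) :
    #{w ∈ A | p ≤ #{u ∈ s | G.Adj w u}} * L ≤
      (p - 1 : ℕ) * (G.edgeCliqueCount (p + 1) A s : ℝ) := by
  set X := {w ∈ A | p ≤ #{u ∈ s | G.Adj w u}}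
  have hXA : X ⊆ A := filter_subset _ _
  choose! z hzs hz using fun w (hw : w ∈ X) =>
    exists_erase_subset_filter (G.Adj w) hs.2 (mem_filter.1 hw).2
  calc #X * L ≤ ∑ w ∈ X, (G.edgeCliqueCount p {u ∈ A | G.Adj w u} (s.erase (z w)) : ℝ) := by
        rw [← nsmul_eq_mul]
        refine card_nsmul_le_sum _ _ _ fun w hw => hL w (hXA hw) _ ?_ fun u hu => ?_
        · simpa using hs.erase_of_mem (hzs w hw)
        · obtain ⟨hus, hwu⟩ := mem_filter.1 (hz w hw hu)
          exact mem_filter.2 ⟨hsA hus, hwu⟩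
    _ ≤ (p - 1 : ℕ) * (G.edgeCliqueCount (p + 1) A s : ℝ) := by
        exact_mod_cast sum_edgeCliqueCount_filter_adj_le hXA fun w _ => erase_subset _ _

lemma exists_le_card_cliquesThrough {p : ℕ} {A s : Finset V} {c : ℝ} (hp : 2 ≤ p)
    (hs : G.IsNClique p s) (hc : p.choose 2 * c ≤ G.edgeCliqueCount p A s) :
    ∃ e ∈ s.powersetCard 2, c ≤ #(G.cliquesThrough p A e) := by
  refine exists_le_of_sum_le (powersetCard_nonempty.2 (hs.2 ▸ hp)) ?_
  rw [sum_const, card_powersetCard, hs.2, nsmul_eq_mul]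
  exact_mod_cast hc

theorem le_edgeCliqueCount_of_isDenseOn {β : ℝ} (hβ : 0 ≤ β) (n : ℕ) {A s : Finset V}
    (hA : G.IsDenseOn A (1 - 2 / (2 * n + 3) + β)) (hs : G.IsNClique (n + 3) s) (hsA : s ⊆ A) :
    3 * β * (#A / (2 * n + 3)) ^ (n + 1) ≤ (n + 1) * (G.edgeCliqueCount (n + 3) A s : ℝ) := by
  induction n generalizing A s with
  | zero =>
    have hX := mul_le_mul_card_add_two_mul_card_filter (k := 1) hs.2 fun u hu => hA u (hsA hu)
    have hT := card_mul_le_edgeCliqueCount (p := 2) (L := 1) hs hsA fun w _ t ht htA => by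
      exact_mod_cast choose_two_le_edgeCliqueCount ht htA
    norm_num at hX hT ⊢
    have hT' : (#{w ∈ A | 2 ≤ #{u ∈ s | G.Adj w u}} : ℝ) ≤ G.edgeCliqueCount 3 A s := by
      exact_mod_cast hT
    nlinarith [mul_nonneg hβ (Nat.cast_nonneg (α := ℝ) #A)]
  | succ n ih =>
    have hcast : 2 * ((n + 1 : ℕ) : ℝ) + 3 = 2 * n + 5 := by push_cast; ring
    rw [hcast] at hA ⊢
    set y := (#A : ℝ) / (2 * n + 5)
    have hAy : (1 - 2 / (2 * n + 5)) * (#A : ℝ) = (2 * n + 3) * y := by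
      simp only [y]; field_simp; ring
    have hβA : 0 ≤ β * #A := mul_nonneg hβ (Nat.cast_nonneg _)
    have hL : ∀ w ∈ A, ∀ t, G.IsNClique (n + 3) t → t ⊆ {u ∈ A | G.Adj w u} →
        3 * β * y ^ (n + 1) / (n + 1) ≤ G.edgeCliqueCount (n + 3) {u ∈ A | G.Adj w u} t := by
      intro w hw t ht htN
      have hdense := hA.filter_adj (b := 2 / (2 * n + 3)) (by field_simp; ring) (by positivity)
        (div_le_div_of_nonneg_left zero_le_two (by positivity) (by linarith)) hβ hw
      have hy : y ≤ #{u ∈ A | G.Adj w u} / (2 * n + 3) := by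
        rw [le_div_iff₀ (by positivity)]
        linarith [hA w hw]
      rw [div_le_iff₀ (by positivity), mul_comm _ ((n : ℝ) + 1)]
      refine le_trans ?_ (ih hdense ht htN)
      gcongr
    have hX := mul_le_mul_card_add_two_mul_card_filter (k := n + 2) hs.2 fun u hu => hA u (hsA hu)
    have hT := card_mul_le_edgeCliqueCount (p := n + 3) hs hsA hL
    have hXy : (n + 1) * y ≤ #{w ∈ A | n + 3 ≤ #{u ∈ s | G.Adj w u}} := by
      have hM : (#A : ℝ) = (2 * n + 5) * y := by simp only [y]; field_simp
      have hexp : ((n : ℝ) + 2 + 2) * ((1 - 2 / (2 * n + 5) + β) * #A) =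
          (n + 4) * ((2 * n + 3) * y) + (n + 4) * (β * #A) := by rw [← hAy]; ring
      rw [show n + 2 + 1 = n + 3 from rfl] at hX
      push_cast at hX
      nlinarith [mul_nonneg (by positivity : (0 : ℝ) ≤ n + 4) hβA]
    calc 3 * β * y ^ (n + 1 + 1) = (n + 1) * y * (3 * β * y ^ (n + 1) / (n + 1)) := by
          field_simp; ring
      _ ≤ #{w ∈ A | n + 3 ≤ #{u ∈ s | G.Adj w u}} * (3 * β * y ^ (n + 1) / (n + 1)) := by
          gcongr
      _ ≤ ((n + 3 - 1 : ℕ) : ℝ) * G.edgeCliqueCount (n + 3 + 1) A s := hT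
      _ = ((n + 1 : ℕ) + 1) * G.edgeCliqueCount (n + 1 + 3) A s := by push_cast; ring_nf

end CliquesThroughEdges

end SimpleGraph

theorem every_clique_has_heavy_edge (p : ℕ) (hp : 3 ≤ p) (β : ℝ) (hβ : 0 < β)
    (m : ℕ) (Γ : SimpleGraph (Fin m))
    (hdeg : ∀ v, (1 - 2 / (2 * (p : ℝ) - 3) + β) * m ≤ (degCount Γ v : ℝ)) :
    ∀ s : Finset (Fin m), Γ.IsNClique p s →
      ∃ u v : Fin m, u ∈ s ∧ v ∈ s ∧ Γ.Adj u v ∧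
        β * ((m : ℝ) / (8 * p)) ^ (p - 2)
          ≤ ({q : Finset (Fin m) | Γ.IsNClique p q ∧ u ∈ q ∧ v ∈ q}.ncard : ℝ) := by
  classical
  intro s hs
  obtain ⟨n, rfl⟩ : ∃ n, p = n + 3 := ⟨p - 3, by omega⟩
  have hdense : Γ.IsDenseOn univ (1 - 2 / (2 * n + 3) + β) :=
    isDenseOn_univ_of_le_degCount fun v => by
      convert hdeg v using 4
      · push_cast; ring
      · simp
  have hbound := Γ.le_edgeCliqueCount_of_isDenseOn hβ.le n hdense hs (subset_univ s)
  rw [card_univ, Fintype.card_fin] at hbound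
  obtain ⟨e, he, hle⟩ := exists_le_card_cliquesThrough (by omega) hs
    (choose_two_mul_le_of_three_mul_pow_le hβ.le (Nat.cast_nonneg m) n hbound)
  obtain ⟨hes, he2⟩ := mem_powersetCard.1 he
  obtain ⟨u, v, huv, rfl⟩ := card_eq_two.1 he2
  have hu : u ∈ s := hes (mem_insert_self _ _)
  have hv : v ∈ s := hes (mem_insert_of_mem (mem_singleton_self _))
  refine ⟨u, v, hu, hv, hs.1 hu hv huv, hle.trans_eq ?_⟩
  rw [← Set.ncard_coe_finset]
  congr 2
  ext q
  simp [mem_cliquesThrough, insert_subset_iff]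
end

section
/- Let k, r, s, t be positive integers with s ≤ t and 2k ≤ t, and let G be any graph. Let Γ be a G-free graph on N ≥ binom(t,s)^r · (t/(2ks)) · r(G, K_s) vertices which contains K_r(t) as an induced subgraph with parts V_1, …, V_r. If the complement of Γ does not contain any book B_{k,n} with n ≥ (1 − 4ks/t)·N/r vertices, then Γ contains an induced copy of K_{r+1}(s) with parts W_0, W_1, …, W_r where W_i ⊆ V_i for every 1 ≤ i ≤ r. -/
open SimpleGraph

/-!
A vertex is *rich* if it has at least `s` neighbours in every part `V i`. A vertex with fewer than
`s` neighbours in `V i` misses at least `t - s` of its vertices, so if there were many such poor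
vertices, averaging over the `k`-subsets of the independent set `V i` would give a spine
`K ⊆ V i` missed entirely by many of them: a large book in the complement. Since
`C(t - s, k) ≥ (1 - ks/t) C(t, k)`, each part has fewer than `(1 - 4ks/t) N / ((1 - ks/t) r)` poor
vertices, and at least `3ks N / t ≥ C(t, s)^r r(G, K_s)` vertices are rich. Each rich vertex picks
an `s`-subset of its neighbourhood in every part; by pigeonhole one choice `(W_1, …, W_r)` is
shared by `r(G, K_s)` rich vertices, among which the `G`-free graph `Γ` has an independent
`s`-set `W_0`.
-/

open Finset SimpleGraph

theorem containsCopy_iff_isContained {α β : Type*} {G : SimpleGraph α} {Γ : SimpleGraph β} :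
    ContainsCopy G Γ ↔ G ⊑ Γ :=
  ⟨fun ⟨f, hf, hadj⟩ => ⟨⟨⟨f, @hadj⟩, hf⟩⟩,
    fun ⟨c⟩ => ⟨c, c.injective, fun _ _ h => c.toHom.map_adj h⟩⟩

theorem SimpleGraph.exists_isNClique_or_isNClique_compl {V : Type*} (Γ : SimpleGraph V)
    (m n : ℕ) (U : Finset V) (hU : (m + n).choose m ≤ #U) :
    ∃ S ⊆ U, Γ.IsNClique m S ∨ Γᶜ.IsNClique n S := by
  classical
  obtain ⟨p, hp⟩ : ∃ p, m + n = p := ⟨_, rfl⟩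
  induction p generalizing Γ m n U with
  | zero => exact ⟨∅, empty_subset _, Or.inl (by simp; omega)⟩
  | succ p ih =>
    have extend : ∀ (Γ : SimpleGraph V) (m n : ℕ), m + n = p → ∀ v ∈ U, ∀ T ⊆ U,
        (∀ w ∈ T, Γ.Adj v w) → (m + n).choose m ≤ #T →
        ∃ S ⊆ U, Γ.IsNClique (m + 1) S ∨ Γᶜ.IsNClique n S := by
      intro Γ m n hmn v hv T hTU hT hcard
      obtain ⟨S, hST, hS | hS⟩ := ih Γ m n T hcard hmn
      · exact ⟨insert v S, insert_subset hv (hST.trans hTU),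
          Or.inl (hS.insert fun w hw => hT w (hST hw))⟩
      · exact ⟨S, hST.trans hTU, Or.inr hS⟩
    rcases m with _ | m
    · exact ⟨∅, empty_subset _, Or.inl (by simp)⟩
    rcases n with _ | n
    · exact ⟨∅, empty_subset _, Or.inr (by simp)⟩
    obtain ⟨v, hv⟩ : U.Nonempty := card_pos.1 (hU.trans_lt' (Nat.choose_pos (by omega)))
    set T₁ := {w ∈ U | Γ.Adj v w}
    set T₂ := {w ∈ U | Γᶜ.Adj v w}
    have hsplit : #U ≤ #T₁ + #T₂ + 1 := by
      calc #U ≤ #(insert v (T₁ ∪ T₂)) := card_le_card fun w hw => by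
              by_cases h : v = w <;> simp_all [T₁, T₂, em]
        _ ≤ #T₁ + #T₂ + 1 := (card_insert_le _ _).trans (by grw [card_union_le])
    have hpascal : (m + 1 + (n + 1)).choose (m + 1) =
        (m + (n + 1)).choose m + (n + (m + 1)).choose n := by
      rw [Nat.choose_symm_add (a := n), show m + 1 + (n + 1) = m + (n + 1) + 1 by omega,
        Nat.choose_succ_succ', show n + (m + 1) = m + (n + 1) by omega]
    by_cases h : (m + (n + 1)).choose m ≤ #T₁
    · exact extend Γ m (n + 1) (by omega) v hv T₁ (filter_subset _ _)
        (fun w hw => (mem_filter.1 hw).2) h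
    · obtain ⟨S, hSU, hS⟩ := extend Γᶜ n (m + 1) (by omega) v hv T₂ (filter_subset _ _)
        (fun w hw => (mem_filter.1 hw).2) (by omega)
      exact ⟨S, hSU, by rwa [compl_compl, or_comm] at hS⟩

theorem isContained_of_not_cliqueFree {α V : Type*} [Fintype α] (G : SimpleGraph α)
    {Γ : SimpleGraph V} (h : ¬Γ.CliqueFree (Fintype.card α)) : G ⊑ Γ :=
  (isContained_top_iff.2 ⟨(Fintype.equivFin α).toEmbedding⟩).trans
    ((not_cliqueFree_iff_top_isContained _).1 h)

theorem ramseyNumber_spec {α β : Type*} [Fintype α] [Fintype β] (G : SimpleGraph α)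
    (H : SimpleGraph β) (Γ : SimpleGraph (Fin (ramseyNumber G H))) :
    ContainsCopy G Γ ∨ ContainsCopy H Γᶜ := by
  refine Nat.sInf_mem
    (s := {N | ∀ Γ : SimpleGraph (Fin N), ContainsCopy G Γ ∨ ContainsCopy H Γᶜ})
    ⟨(Fintype.card α + Fintype.card β).choose (Fintype.card α), fun Γ => ?_⟩ Γ
  simp only [containsCopy_iff_isContained]
  obtain ⟨S, -, hS | hS⟩ :=
    Γ.exists_isNClique_or_isNClique_compl (Fintype.card α) (Fintype.card β) univ (by simp)
  exacts [.inl (isContained_of_not_cliqueFree G hS.not_cliqueFree),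
    .inr (isContained_of_not_cliqueFree H hS.not_cliqueFree)]

theorem exists_isNIndepSet_of_ramseyNumber_le {α V : Type*} [Fintype α] {G : SimpleGraph α}
    {Γ : SimpleGraph V} (hΓ : ¬ContainsCopy G Γ) {s : ℕ} {U : Finset V}
    (hU : ramseyNumber G (⊤ : SimpleGraph (Fin s)) ≤ #U) : ∃ W ⊆ U, Γ.IsNIndepSet s W := by
  let f : Fin (ramseyNumber G (⊤ : SimpleGraph (Fin s))) ↪ V :=
    (Fin.castLEEmb hU).trans (U.equivFin.symm.toEmbedding.trans (.subtype _))
  have hfU (i) : f i ∈ U := (U.equivFin.symm _).2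
  obtain hG | hK := ramseyNumber_spec G ⊤ (Γ.comap f)
  · exact (hΓ (containsCopy_iff_isContained.2
      ((containsCopy_iff_isContained.1 hG).trans (Embedding.comap f Γ).isContained))).elim
  obtain ⟨T, hT⟩ : ∃ T, (Γ.comap f)ᶜ.IsNClique s T := by
    simpa [CliqueFree] using
      (not_cliqueFree_iff_top_isContained s).2 (containsCopy_iff_isContained.1 hK)
  refine ⟨T.map f, fun v hv => ?_, ?_⟩
  · obtain ⟨i, -, rfl⟩ := mem_map.1 hv
    exact hfU i
  · rw [← isNClique_compl]
    refine (hT.map (f := f)).mono ((map_le_iff_le_comap _ _ _).2 fun a b hab => ?_)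
    exact ⟨f.injective.ne hab.1, hab.2⟩

theorem Nat.choose_le_choose_pred_add (n k : ℕ) :
    n.choose k ≤ (n - 1).choose k + (n - 1).choose (k - 1) := by
  rcases n with _ | n
  · simp
  rcases k with _ | k
  · simp
  simp [Nat.choose_succ_succ', add_comm]

theorem Nat.choose_le_choose_sub_add (t s k : ℕ) :
    t.choose k ≤ (t - s).choose k + s * (t - 1).choose (k - 1) := by
  induction s with
  | zero => simp
  | succ s ih =>
    have := Nat.choose_le_choose_pred_add (t - s) k
    have := Nat.choose_le_choose (k - 1) (show t - s - 1 ≤ t - 1 by omega)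
    rw [Nat.sub_sub] at *
    nlinarith

theorem one_sub_mul_div_mul_choose_le (t k s : ℕ) :
    (1 - k * s / t : ℝ) * t.choose k ≤ (t - s).choose k := by
  rcases t with _ | t
  · simp
  rcases k with _ | k
  · simp
  have hle := Nat.choose_le_choose_sub_add (t + 1) s (k + 1)
  have hpascal := Nat.add_one_mul_choose_eq t k
  simp only [add_tsub_cancel_right] at hle
  have : ((k + 1 : ℕ) * s / (t + 1 : ℕ) : ℝ) * (t + 1).choose (k + 1) = s * t.choose k := by
    field_simp
    exact_mod_cast by rw [mul_assoc s, hpascal]; ring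
  rw [sub_mul, one_mul, this]
  have : ((t + 1).choose (k + 1) : ℝ) ≤ (t + 1 - s).choose (k + 1) + s * t.choose k := by
    exact_mod_cast hle
  linarith

theorem Finset.exists_mul_choose_le_choose_mul_card_filter {β γ : Type*} [DecidableEq β]
    {S : Finset β} {B : Finset γ} {M : γ → Finset β} {m k : ℕ}
    (hMS : ∀ u ∈ B, M u ⊆ S) (hm : ∀ u ∈ B, m ≤ #(M u)) (hk : k ≤ #S) :
    ∃ K ⊆ S, #K = k ∧ #B * m.choose k ≤ (#S).choose k * #{u ∈ B | K ⊆ M u} := by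
  classical
  have hlower (u) (hu : u ∈ B) : m.choose k ≤ #{K ∈ S.powersetCard k | K ⊆ M u} :=
    calc m.choose k ≤ #((M u).powersetCard k) := by
          rw [card_powersetCard]; exact Nat.choose_le_choose _ (hm u hu)
      _ ≤ _ := card_le_card fun K hK => by
          rw [mem_powersetCard] at hK
          exact mem_filter.2 ⟨mem_powersetCard.2 ⟨hK.1.trans (hMS u hu), hK.2⟩, hK.1⟩
  have hsum : ∑ _K ∈ S.powersetCard k, #B * m.choose k ≤
      ∑ K ∈ S.powersetCard k, (#S).choose k * #{u ∈ B | K ⊆ M u} := by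
    have hdouble := sum_card_bipartiteAbove_eq_sum_card_bipartiteBelow
      (s := B) (t := S.powersetCard k) (r := fun u K => K ⊆ M u)
    simp only [bipartiteAbove, bipartiteBelow] at hdouble
    rw [sum_const, card_powersetCard, smul_eq_mul, ← mul_sum, ← hdouble]
    gcongr
    simpa using sum_le_sum hlower
  obtain ⟨K, hK, hle⟩ := exists_le_of_sum_le (powersetCard_nonempty.2 hk) hsum
  exact ⟨K, (mem_powersetCard.1 hK).1, (mem_powersetCard.1 hK).2, hle⟩

theorem Finset.card_le_card_filter_forall_add_sum {ι V : Type*} [Fintype ι] [Fintype V]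
    (p : ι → V → Prop) [∀ i, DecidablePred (p i)] [DecidablePred fun u => ∀ i, p i u] :
    Fintype.card V ≤ #{u | ∀ i, p i u} + ∑ i, #{u | ¬p i u} := by
  classical
  calc Fintype.card V = #(univ : Finset V) := card_univ.symm
    _ ≤ #(({u | ∀ i, p i u} : Finset V) ∪ univ.biUnion fun i => {u | ¬p i u}) :=
        card_le_card fun u _ => by by_cases h : ∀ i, p i u <;> simp_all
    _ ≤ _ := (card_union_le _ _).trans (Nat.add_le_add_left card_biUnion_le _)

theorem book_isContained_compl {V : Type*} [DecidableEq V] {Γ : SimpleGraph V} {K P : Finset V}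
    (hKP : Disjoint K P) (hK : ∀ a ∈ K, ∀ b ∈ K ∪ P, ¬Γ.Adj a b) :
    Book #K (#K + #P) ⊑ Γᶜ := by
  let f : Fin (#K + #P) → V :=
    Fin.append (fun i => (K.equivFin.symm i : V)) (fun j => (P.equivFin.symm j : V))
  have hf : Function.Injective f := Fin.append_injective_iff.2
    ⟨Subtype.val_injective.comp K.equivFin.symm.injective,
      Subtype.val_injective.comp P.equivFin.symm.injective,
      fun i j h => disjoint_left.1 hKP (K.equivFin.symm i).2 (h ▸ (P.equivFin.symm j).2)⟩
  have hmem (i) : f i ∈ K ∪ P := by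
    refine Fin.addCases (fun i => ?_) (fun j => ?_) i <;> simp [f]
  have hspine (i : Fin (#K + #P)) (hi : (i : ℕ) < #K) : f i ∈ K := by
    obtain ⟨j, rfl⟩ : ∃ j : Fin #K, i = Fin.castAdd _ j := ⟨⟨i, hi⟩, rfl⟩
    simp [f]
  refine ⟨⟨⟨f, fun {a b} hab => ?_⟩, hf⟩⟩
  rw [Book, fromRel_adj] at hab
  refine (compl_adj ..).2 ⟨hf.ne hab.1, ?_⟩
  rcases (by omega : (a : ℕ) < #K ∨ (b : ℕ) < #K) with h | h
  · exact hK _ (hspine a h) _ (hmem b)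
  · exact fun h' => hK _ (hspine b h) _ (hmem a) h'.symm

theorem pos_of_forall_not_book {β : Type*} {H : SimpleGraph β} {k : ℕ} {x : ℝ}
    (hbook : ∀ n : ℕ, x ≤ n → ¬ContainsCopy (Book k n) H) : 0 < x := by
  by_contra! hx
  exact hbook 0 (by simpa using hx) (containsCopy_iff_isContained.2 .of_isEmpty)

theorem one_sub_mul_card_lt_of_forall_not_book {V : Type*} [Fintype V] [DecidableEq V]
    {Γ : SimpleGraph V} [DecidableRel Γ.Adj] {S : Finset V} (hS : Γ.IsIndepSet S) {k : ℕ}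
    (hk : k ≤ #S) (s : ℕ) {x : ℝ}
    (hbook : ∀ n : ℕ, x ≤ n → ¬ContainsCopy (Book k n) Γᶜ) :
    (1 - k * s / #S : ℝ) * #{u | #{v ∈ S | Γ.Adj u v} < s} < x := by
  set B := ({u | #{v ∈ S | Γ.Adj u v} < s} : Finset V)
  set M : V → Finset V := fun u => {v ∈ S.erase u | ¬Γ.Adj u v}
  -- a poor vertex `u` misses at least `#S - s` vertices of `S.erase u`; a `k`-set common to many
  -- of these non-neighbourhoods is the spine of a book whose pages are those `u`
  have hM (u) (hu : u ∈ B) : #S - s ≤ #(M u) := by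
    have hsplit := card_filter_add_card_filter_not (s := S.erase u) (fun v => Γ.Adj u v)
    have hadj : #{v ∈ S.erase u | Γ.Adj u v} ≤ #{v ∈ S | Γ.Adj u v} :=
      card_le_card (filter_subset_filter _ (erase_subset _ _))
    have hlow : #{v ∈ S | Γ.Adj u v} < s := (mem_filter.1 hu).2
    have := pred_card_le_card_erase (s := S) (a := u)
    simp only [M]
    omega
  obtain ⟨K, hKS, hKcard, hcount⟩ := exists_mul_choose_le_choose_mul_card_filter
    (fun u _ => (filter_subset _ _).trans (erase_subset u S)) hM hk
  set P := {u ∈ B | K ⊆ M u}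
  have hbookP : ContainsCopy (Book k (k + #P)) Γᶜ := by
    rw [containsCopy_iff_isContained, ← hKcard]
    refine book_isContained_compl (disjoint_left.2 fun u huK huP => ?_) fun a ha b hb => ?_
    · simpa [M] using (mem_filter.1 huP).2 huK
    rcases mem_union.1 hb with hb | hb
    · exact fun h => hS (hKS ha) (hKS hb) h.ne h
    · exact fun h => (mem_filter.1 ((mem_filter.1 hb).2 ha)).2 h.symm
  have hPx : (k + #P : ℝ) < x := by
    by_contra! h
    exact hbook _ (by exact_mod_cast h) hbookP
  have hpos : (0 : ℝ) < (#S).choose k := by exact_mod_cast Nat.choose_pos hk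
  have hratio := one_sub_mul_div_mul_choose_le #S k s
  have hcount' : (#B * (#S - s).choose k : ℝ) ≤ (#S).choose k * #P := by exact_mod_cast hcount
  have hBP : (1 - k * s / #S : ℝ) * #B ≤ #P := by
    refine le_of_mul_le_mul_right ?_ hpos
    calc (1 - k * s / #S : ℝ) * #B * (#S).choose k
        = (1 - k * s / #S : ℝ) * (#S).choose k * #B := by ring
      _ ≤ (#S - s).choose k * #B := by gcongr
      _ ≤ #P * (#S).choose k := by linarith
  linarith

theorem three_mul_le_card_filter_forall_le_card_adj {V : Type*} [Fintype V] [DecidableEq V]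
    {Γ : SimpleGraph V} [DecidableRel Γ.Adj] {r t k s : ℕ} {P : Fin r → Finset V}
    (hP : IsCompleteMultipartiteIn Γ t P) (hr : 0 < r) (hk : k ≤ t) (hks : k * s ≤ t)
    (hbook : ∀ n : ℕ, (1 - 4 * k * s / t : ℝ) * Fintype.card V / r ≤ n →
      ¬ContainsCopy (Book k n) Γᶜ) :
    3 * (k * s / t : ℝ) * Fintype.card V ≤ #{u | ∀ i, s ≤ #{v ∈ P i | Γ.Adj u v}} := by
  set a : ℝ := k * s / t
  set poor : Fin r → Finset V := fun i => {u | #{v ∈ P i | Γ.Adj u v} < s}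
  have hpoor (i) : (1 - a) * #(poor i) < (1 - 4 * k * s / t : ℝ) * Fintype.card V / r := by
    simpa [hP.1 i] using one_sub_mul_card_lt_of_forall_not_book
      (fun a ha b hb _ => hP.2.2.1 i a ha b hb) ((hP.1 i).symm ▸ hk) s hbook
  have hcover :
      Fintype.card V ≤ #{u | ∀ i, s ≤ #{v ∈ P i | Γ.Adj u v}} + ∑ i, #(poor i) := by
    simpa only [not_le] using
      card_le_card_filter_forall_add_sum fun i u => s ≤ #{v ∈ P i | Γ.Adj u v}
  have hcover' : (Fintype.card V : ℝ) ≤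
      #{u | ∀ i, s ≤ #{v ∈ P i | Γ.Adj u v}} + ∑ i, (#(poor i) : ℝ) := by
    exact_mod_cast hcover
  have hsum : (1 - a) * ∑ i, (#(poor i) : ℝ) ≤ (1 - 4 * a) * Fintype.card V :=
    calc _ = ∑ i, (1 - a) * #(poor i) := mul_sum ..
      _ ≤ ∑ _i : Fin r, (1 - 4 * k * s / t : ℝ) * Fintype.card V / r :=
          sum_le_sum fun i _ => (hpoor i).le
      _ = (1 - 4 * a) * Fintype.card V := by
          rw [sum_const, card_univ, Fintype.card_fin, nsmul_eq_mul]
          field_simp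
          ring
  have ha₀ : 0 ≤ a := by positivity
  have ha₁ : a ≤ 1 := div_le_one_of_le₀ (by exact_mod_cast hks) (Nat.cast_nonneg t)
  -- `(1 - 4a) / (1 - a) ≤ 1 - 3a`
  nlinarith

theorem exists_forall_subset_forall_adj_of_prod_choose_mul_le {V ι : Type*} [DecidableEq V]
    [Fintype ι] [DecidableEq ι] (Γ : SimpleGraph V) [DecidableRel Γ.Adj] {P : ι → Finset V}
    {s R : ℕ} (hP : ∀ i, s ≤ #(P i)) {U : Finset V}
    (hU : ∀ u ∈ U, ∀ i, s ≤ #{v ∈ P i | Γ.Adj u v})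
    (hR : (∏ i, (#(P i)).choose s) * R ≤ #U) :
    ∃ Q : ι → Finset V, (∀ i, Q i ⊆ P i ∧ #(Q i) = s) ∧
      ∃ U' ⊆ U, R ≤ #U' ∧ ∀ u ∈ U', ∀ i, ∀ v ∈ Q i, Γ.Adj u v := by
  choose! Q hQ using fun u (hu : u ∈ U) i => exists_subset_card_eq (hU u hu i)
  have hmaps (u) (hu : u ∈ U) : Q u ∈ Fintype.piFinset fun i => (P i).powersetCard s :=
    Fintype.mem_piFinset.2 fun i =>
      mem_powersetCard.2 ⟨(hQ u hu i).1.trans (filter_subset _ _), (hQ u hu i).2⟩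
  obtain ⟨y, hy, hfiber⟩ := exists_le_card_fiber_of_mul_le_card_of_maps_to hmaps
    (Fintype.piFinset_nonempty.2 fun i => powersetCard_nonempty.2 (hP i))
    (by simpa [Fintype.card_piFinset] using hR)
  refine ⟨y, fun i => mem_powersetCard.1 (Fintype.mem_piFinset.1 hy i), _, filter_subset _ _,
    hfiber, fun u hu i v hv => ?_⟩
  obtain ⟨huU, rfl⟩ := mem_filter.1 hu
  exact (mem_filter.1 ((hQ u huU i).1 hv)).2

theorem Fin.forall_ne_cons_iff {α : Type*} {R : α → α → Prop} (hR : ∀ x y, R x y → R y x)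
    {r : ℕ} {a : α} {f : Fin r → α} :
    (∀ i j : Fin (r + 1), i ≠ j →
        R (Fin.cons (α := fun _ => α) a f i) (Fin.cons (α := fun _ => α) a f j)) ↔
      (∀ i, R a (f i)) ∧ ∀ i j, i ≠ j → R (f i) (f j) := by
  simp only [Fin.forall_fin_succ, Fin.cons_zero, Fin.cons_succ, ne_eq, not_true_eq_false,
    false_imp_iff, Fin.succ_ne_zero, Fin.succ_inj, true_and, not_false_eq_true, forall_const,
    (Fin.succ_ne_zero _).symm]
  exact ⟨fun h => ⟨h.1, fun i => (h.2 i).2⟩,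
    fun h => ⟨h.1, fun i => ⟨hR _ _ (h.1 i), h.2 i⟩⟩⟩

theorem IsCompleteMultipartiteIn.mono {V : Type*} {Γ : SimpleGraph V} {r t s : ℕ}
    {P Q : Fin r → Finset V} (hP : IsCompleteMultipartiteIn Γ t P)
    (hQ : ∀ i, Q i ⊆ P i ∧ #(Q i) = s) : IsCompleteMultipartiteIn Γ s Q :=
  ⟨fun i => (hQ i).2, fun i j hij => (hP.2.1 i j hij).mono (hQ i).1 (hQ j).1,
    fun i a ha b hb => hP.2.2.1 i a ((hQ i).1 ha) b ((hQ i).1 hb),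
    fun i j hij a ha b hb => hP.2.2.2 i j hij a ((hQ i).1 ha) b ((hQ j).1 hb)⟩

theorem IsCompleteMultipartiteIn.cons {V : Type*} {Γ : SimpleGraph V} {r s : ℕ}
    {Q : Fin r → Finset V} {W : Finset V} (hQ : IsCompleteMultipartiteIn Γ s Q)
    (hW : Γ.IsNIndepSet s W) (hWQ : ∀ i, ∀ a ∈ W, ∀ b ∈ Q i, Γ.Adj a b) :
    IsCompleteMultipartiteIn Γ s (Fin.cons W Q : Fin (r + 1) → Finset V) := by
  obtain ⟨hcard, hdisj, hind, hadj⟩ := hQ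
  refine ⟨Fin.cases hW.card_eq hcard, (Fin.forall_ne_cons_iff fun _ _ h => h.symm).2
      ⟨fun i => disjoint_left.2 fun a ha ha' => (hWQ i a ha a ha').ne rfl, hdisj⟩,
    Fin.cases (fun a ha b hb h => hW.isIndepSet ha hb h.ne h) hind,
    (Fin.forall_ne_cons_iff (R := fun X Y => ∀ a ∈ X, ∀ b ∈ Y, Γ.Adj a b)
      fun _ _ h a ha b hb => (h b hb a ha).symm).2 ⟨hWQ, hadj⟩⟩

theorem greedy_embedding_lemma_general (k r s t : ℕ) (hk : 1 ≤ k) (hs : 1 ≤ s)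
    (hst : s ≤ t)
    {α : Type*} [Fintype α] (G : SimpleGraph α)
    (N : ℕ)
    (hN : ((t.choose s : ℝ)) ^ r * ((t : ℝ) / (2 * k * s))
        * (ramseyNumber G (⊤ : SimpleGraph (Fin s)) : ℝ) ≤ (N : ℝ))
    (Γ : SimpleGraph (Fin N)) (hfree : ¬ ContainsCopy G Γ)
    (V : Fin r → Finset (Fin N)) (hV : IsCompleteMultipartiteIn Γ t V)
    (hbook : ∀ n : ℕ, (1 - 4 * k * s / (t : ℝ)) * N / r ≤ (n : ℝ) →
      ¬ ContainsCopy (Book k n) Γᶜ) :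
    ∃ W : Fin (r + 1) → Finset (Fin N),
      IsCompleteMultipartiteIn Γ s W ∧ ∀ i : Fin r, W i.succ ⊆ V i := by
  classical
  have hx := pos_of_forall_not_book hbook
  have hr : 0 < r := Nat.pos_of_ne_zero fun hr => by simp [hr] at hx
  have ht : (0 : ℝ) < t := by exact_mod_cast (by omega : 0 < t)
  have hks : 4 * k * s < t := by
    have h := pos_of_mul_pos_left ((div_pos_iff_of_pos_right (by exact_mod_cast hr)).1 hx)
      (Nat.cast_nonneg N)
    rw [sub_pos, div_lt_one ht] at h
    exact_mod_cast h
  have hrich := three_mul_le_card_filter_forall_le_card_adj (k := k) (s := s) hV hr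
    (by nlinarith) (by nlinarith) (by simpa using hbook)
  have hRN : (t.choose s : ℝ) ^ r * ramseyNumber G (⊤ : SimpleGraph (Fin s)) ≤
      2 * (k * s / t) * N :=
    calc _ = 2 * (k * s / t) * ((t.choose s : ℝ) ^ r * (t / (2 * k * s))
          * ramseyNumber G (⊤ : SimpleGraph (Fin s))) := by field_simp
      _ ≤ _ := by gcongr
  have hU : (∏ i, (#(V i)).choose s) * ramseyNumber G (⊤ : SimpleGraph (Fin s)) ≤
      #{u | ∀ i, s ≤ #{v ∈ V i | Γ.Adj u v}} := by
    simp only [hV.1, prod_const, card_univ, Fintype.card_fin] at hrich ⊢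
    rw [← Nat.cast_le (α := ℝ), Nat.cast_mul, Nat.cast_pow]
    nlinarith [show (0 : ℝ) ≤ k * s / t by positivity]
  obtain ⟨Q, hQ, U, -, hR, hUQ⟩ := exists_forall_subset_forall_adj_of_prod_choose_mul_le Γ
    (fun i => (hV.1 i).symm ▸ hst) (fun u hu => (mem_filter.1 hu).2) hU
  obtain ⟨W, hWU, hW⟩ := exists_isNIndepSet_of_ramseyNumber_le hfree hR
  exact ⟨Fin.cons W Q, (hV.mono hQ).cons hW fun i a ha => hUQ a (hWU ha) i,
    fun i => by simpa using (hQ i).1⟩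

theorem greedy_embedding_lemma (k r s t : ℕ) (hk : 1 ≤ k) (hr : 1 ≤ r) (hs : 1 ≤ s)
    (hst : s ≤ t) (hkt : 2 * k ≤ t)
    {α : Type*} [Fintype α] (G : SimpleGraph α)
    (N : ℕ)
    (hN : ((t.choose s : ℝ)) ^ r * ((t : ℝ) / (2 * k * s))
        * (ramseyNumber G (⊤ : SimpleGraph (Fin s)) : ℝ) ≤ (N : ℝ))
    (Γ : SimpleGraph (Fin N)) (hfree : ¬ ContainsCopy G Γ)
    (V : Fin r → Finset (Fin N)) (hV : IsCompleteMultipartiteIn Γ t V)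
    (hbook : ∀ n : ℕ, (1 - 4 * k * s / (t : ℝ)) * N / r ≤ (n : ℝ) →
      ¬ ContainsCopy (Book k n) Γᶜ) :
    ∃ W : Fin (r + 1) → Finset (Fin N),
      IsCompleteMultipartiteIn Γ s W ∧ ∀ i : Fin r, W i.succ ⊆ V i :=
  greedy_embedding_lemma_general k r s t hk hs hst G N hN Γ hfree V hV hbook
end

section
/- If a K_p-free graph Γ on n vertices contains K_{p−1}(k) as an induced subgraph, then the vertex set of Γ can be partitioned into p−1 subsets U_1, …, U_{p−1} such that for each i there is a k-element subset S_i ⊆ U_i that is an independent set of Γ and such that no vertex of U_i \ S_i is adjacent in Γ to any vertex of S_i (so each U_i spans a k-book in the complement of Γ, with spine S_i). -/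
open SimpleGraph

theorem partition_into_books (p k n : ℕ)
    (Γ : SimpleGraph (Fin n)) (hfree : Γ.CliqueFree p)
    (V : Fin (p - 1) → Finset (Fin n)) (hV : IsCompleteMultipartiteIn Γ k V) :
    ∃ U S : Fin (p - 1) → Finset (Fin n),
      (∀ i j, i ≠ j → Disjoint (U i) (U j)) ∧ (∀ v, ∃ i, v ∈ U i) ∧
      (∀ i, S i ⊆ U i ∧ (S i).card = k ∧
        (∀ a ∈ S i, ∀ b ∈ S i, ¬ Γ.Adj a b) ∧
        (∀ u ∈ U i, u ∉ S i → ∀ a ∈ S i, ¬ Γ.Adj u a)) := by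
  classical
  obtain ⟨hcard, hdisj, hindep, hadjparts⟩ := hV
  rcases Nat.lt_or_ge p 2 with hp | hp
  · -- p = 0 or p = 1
    interval_cases p
    · exact absurd (hfree ∅ ⟨by simp, by simp⟩) (by simp)
    · refine ⟨fun _ => ∅, fun _ => ∅, by simp, ?_, fun i => i.elim0⟩
      intro v
      exact absurd (hfree {v} ⟨by simp, by simp⟩) (by simp)
  -- main case : p ≥ 2
  have key : ∀ v : Fin n, ∃ i : Fin (p - 1), ∀ a ∈ V i, ¬ Γ.Adj v a := by
    intro v
    by_contra h
    push_neg at h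
    choose g hg hadj using h
    have ginj : Function.Injective g := by
      intro i j hij
      by_contra hne
      exact (Finset.disjoint_left.1 (hdisj i j hne)) (hg i) (hij ▸ hg j)
    have hvnot : v ∉ Finset.univ.image g := by
      simp only [Finset.mem_image, Finset.mem_univ, true_and]
      rintro ⟨i, hi⟩
      exact Γ.irrefl (hi ▸ hadj i)
    have hclique : Γ.IsNClique p (insert v (Finset.univ.image g)) := by
      constructor
      · intro a ha b hb hab
        simp only [Finset.coe_insert, Set.mem_insert_iff, Finset.coe_image,
          Set.mem_image, Finset.mem_coe, Finset.coe_univ, Set.image_univ,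
          Set.mem_range] at ha hb
        rcases ha with rfl | ⟨i, rfl⟩ <;> rcases hb with rfl | ⟨j, rfl⟩
        · exact absurd rfl hab
        · exact hadj j
        · exact (hadj i).symm
        · refine hadjparts i j ?_ _ (hg i) _ (hg j)
          rintro rfl; exact hab rfl
      · rw [Finset.card_insert_of_notMem hvnot,
          Finset.card_image_of_injective _ ginj, Finset.card_univ, Fintype.card_fin]
        omega
    exact hfree _ hclique
  choose f hf using key
  set F : Fin n → Fin (p - 1) := fun v =>
    if h : ∃ i, v ∈ V i then h.choose else f v with hF
  have hFmem : ∀ v i, v ∈ V i → F v = i := by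
    intro v i hv
    have h : ∃ j, v ∈ V j := ⟨i, hv⟩
    have := h.choose_spec
    simp only [hF, dif_pos h]
    by_contra hne
    exact (Finset.disjoint_left.1 (hdisj _ i hne)) this hv
  refine ⟨fun i => Finset.univ.filter (fun v => F v = i), V, ?_, ?_, ?_⟩
  · intro i j hij
    simp only [Finset.disjoint_left, Finset.mem_filter, Finset.mem_univ, true_and]
    rintro v rfl hv
    exact hij hv
  · intro v
    exact ⟨F v, by simp⟩
  · intro i
    refine ⟨?_, hcard i, hindep i, ?_⟩
    · intro v hv
      simp only [Finset.mem_filter, Finset.mem_univ, true_and]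
      exact hFmem v i hv
    · intro u hu hunot a ha
      simp only [Finset.mem_filter, Finset.mem_univ, true_and] at hu
      by_cases h : ∃ j, u ∈ V j
      · have := h.choose_spec
        have hFi : F u = h.choose := by simp only [hF, dif_pos h]
        rw [hu] at hFi
        exact absurd (hFi ▸ this) hunot
      · have hFi : F u = f u := by simp only [hF, dif_neg h]
        rw [hu] at hFi
        exact hf u a (hFi ▸ ha)
end

section
/- Let 0 < η ≤ 1/2 be real, let p, t ≥ 2 be integers, let 1 ≤ a_1 ≤ … ≤ a_{p−1} ≤ t be integers, and let δ = η^(t^(10p)). Then for every integer m ≥ 2t/η and every integer a_p with 1 ≤ a_p ≤ δm, every K_p(a_1,…,a_p)-free graph Γ on m vertices has at most η·m^p copies of K_p. -/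
open SimpleGraph

/-!
Suppose a graph `Γ` on `n` vertices has at least `c n^(k+1)` cliques of size `k + 1` inside a
vertex set `W`. A `k`-clique `K` with `d K` common neighbours in `W` extends to `d K` such cliques,
and it lies below `(d K).choose t` sets `A` of `t` vertices of `W` that are completely joined to
it. The power-mean inequality for `∑ (d K)^t` and averaging over the at most `n^t` choices of `A`
give one `t`-set `A ⊆ W` whose common neighbourhood in `W` still contains `(c/4t)^t n^k` cliques
of size `k`.

Starting from `η m^p` copies of `K_p` and iterating `p - 1` times yields `t`-sets
`A_1, …, A_{p-1}`, pairwise completely joined, together with a set `W` completely joined to all of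
them and of size at least `η^((2t)^p) m`. Since `δ m ≥ 1` and `δ` is much smaller than
`η^((2t)^p)`, this set has room for the last part of size `a_p ≤ δ m`, and the parts of sizes
`a_1, …, a_p` are found inside `A_1, …, A_{p-1}, W`.
-/

open Finset Function

lemma card_powersetCard_le_pow {α : Type*} [Fintype α] (s : Finset α) (k : ℕ) :
    #(s.powersetCard k) ≤ Fintype.card α ^ k := by
  rw [card_powersetCard]
  exact (Nat.choose_le_pow _ _).trans (Nat.pow_le_pow_left s.card_le_univ _)

lemma pow_mul_le_sum_pow {ι : Type*} {s : Finset ι} {f : ι → ℝ} (hf : ∀ i ∈ s, 0 ≤ f i)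
    {y M : ℝ} (hy : 0 ≤ y) (hM : #s ≤ M) (hsum : y * M ≤ ∑ i ∈ s, f i) (n : ℕ) :
    y ^ (n + 1) * M ≤ ∑ i ∈ s, f i ^ (n + 1) := by
  obtain rfl | hs := s.eq_empty_or_nonempty
  · rw [sum_empty] at hsum ⊢
    calc y ^ (n + 1) * M = y ^ n * (y * M) := by ring
      _ ≤ 0 := mul_nonpos_of_nonneg_of_nonpos (by positivity) hsum
  have hs0 : (0 : ℝ) < #s := by exact_mod_cast hs.card_pos
  have hM0 : 0 < M := hs0.trans_le hM
  have hS : 0 ≤ (∑ i ∈ s, f i) ^ (n + 1) := pow_nonneg (sum_nonneg hf) _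
  calc y ^ (n + 1) * M = (y * M) ^ (n + 1) / M ^ n := by field_simp; ring
    _ ≤ (∑ i ∈ s, f i) ^ (n + 1) / #s ^ n := by gcongr
    _ ≤ ∑ i ∈ s, f i ^ (n + 1) := pow_sum_div_card_le_sum_pow hf n

lemma div_two_mul_pow_le_choose {d t : ℕ} (h : 2 * t ≤ d) :
    ((d : ℝ) / (2 * t)) ^ t ≤ d.choose t := by
  have hd : (d : ℝ) / 2 ≤ ((d + 1 - t : ℕ) : ℝ) := by
    rw [Nat.cast_sub (by omega)]
    have : (2 * t : ℝ) ≤ d := by exact_mod_cast h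
    push_cast
    linarith
  calc ((d : ℝ) / (2 * t)) ^ t = ((d : ℝ) / 2) ^ t / (t : ℝ) ^ t := by
        rw [div_pow, div_pow, mul_pow, div_div]
    _ ≤ ((d + 1 - t : ℕ) : ℝ) ^ t / (t.factorial : ℕ) := by
      gcongr
      exact_mod_cast t.factorial_le_pow
    _ ≤ d.choose t := Nat.pow_le_choose t d

lemma div_four_mul_pow_mul_le_sum_choose {ι : Type*} (s : Finset ι) (d : ι → ℕ) {t : ℕ}
    (ht : 1 ≤ t) {x M : ℝ} (hx : 4 * t ≤ x) (hM : #s ≤ M)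
    (hsum : x * M ≤ ∑ i ∈ s, (d i : ℝ)) :
    (x / (4 * t)) ^ t * M ≤ ∑ i ∈ s, ((d i).choose t : ℝ) := by
  obtain ⟨n, rfl⟩ : ∃ n, t = n + 1 := ⟨t - 1, by omega⟩
  -- `(d i).choose t` is comparable to `(d i / 2t)^t` only when `d i ≥ 2t`, so the terms with
  -- `d i < x / 2` are discarded first: they carry at most half of the sum.
  set large := {i ∈ s | x / 2 ≤ d i}
  have hx0 : 0 ≤ x := le_trans (by positivity) hx
  have hsmall : ∑ i ∈ s with ¬ x / 2 ≤ d i, (d i : ℝ) ≤ x / 2 * M :=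
    calc ∑ i ∈ s with ¬ x / 2 ≤ d i, (d i : ℝ)
        ≤ #{i ∈ s | ¬ x / 2 ≤ d i} * (x / 2) := by
          rw [← nsmul_eq_mul]
          exact sum_le_card_nsmul _ _ _ fun i hi => (not_le.1 (mem_filter.1 hi).2).le
      _ ≤ x / 2 * M := by
          rw [mul_comm]
          gcongr
          exact (Nat.cast_le.2 (card_filter_le _ _)).trans hM
  have hlarge : x / 2 * M ≤ ∑ i ∈ large, (d i : ℝ) := by
    linarith [sum_filter_add_sum_filter_not s (fun i => x / 2 ≤ d i) fun i => (d i : ℝ)]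
  have hpow := pow_mul_le_sum_pow (fun i _ => Nat.cast_nonneg (d i)) (by positivity)
    ((Nat.cast_le.2 (card_filter_le _ _)).trans hM) hlarge n
  calc (x / (4 * ↑(n + 1))) ^ (n + 1) * M
        = (x / 2) ^ (n + 1) * M / (2 * ↑(n + 1)) ^ (n + 1) := by
          rw [show x / (4 * ↑(n + 1)) = x / 2 / (2 * ↑(n + 1)) by ring, div_pow]; ring
    _ ≤ (∑ i ∈ large, (d i : ℝ) ^ (n + 1)) / (2 * ↑(n + 1)) ^ (n + 1) := by gcongr
    _ = ∑ i ∈ large, ((d i : ℝ) / (2 * ↑(n + 1))) ^ (n + 1) := by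
          simp only [sum_div, div_pow]
    _ ≤ ∑ i ∈ large, ((d i).choose (n + 1) : ℝ) := by
          refine sum_le_sum fun i hi => div_two_mul_pow_le_choose ?_
          have hdi := (mem_filter.1 hi).2
          have : (2 * (n + 1 : ℕ) : ℝ) ≤ d i := by push_cast at hx ⊢; linarith
          exact_mod_cast this
    _ ≤ ∑ i ∈ s, ((d i).choose (n + 1) : ℝ) :=
          sum_le_sum_of_subset_of_nonneg (filter_subset _ _) fun _ _ _ => by positivity

section Numerics

variable {η : ℝ}

lemma four_mul_mul_pow_le_one (hη0 : 0 < η) (hη : η ≤ 1 / 2) (t : ℕ) :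
    4 * t * η ^ (2 * t) ≤ 1 := by
  have h4 : (4 * t : ℝ) ≤ 4 ^ t := by exact_mod_cast Nat.mul_le_pow (by norm_num) t
  have hη2 : η ^ (2 * t) ≤ (1 / 4) ^ t := by
    rw [pow_mul]
    gcongr
    nlinarith
  calc 4 * t * η ^ (2 * t) ≤ 4 ^ t * (1 / 4) ^ t := by gcongr
    _ = 1 := by rw [← mul_pow]; norm_num

lemma pow_two_mul_mul_le_div_pow (hη0 : 0 < η) (hη : η ≤ 1 / 2) {t e : ℕ} (ht : 1 ≤ t)
    (he : 2 * t ≤ e) : η ^ (2 * t * e) ≤ (η ^ e / (4 * t)) ^ t := by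
  have hsq : η ^ (2 * e) ≤ η ^ e / (4 * t) := by
    rw [le_div_iff₀ (by positivity)]
    calc η ^ (2 * e) * (4 * t) = η ^ e * η ^ e * (4 * t) := by ring
      _ ≤ η ^ e * η ^ (2 * t) * (4 * t) := by
        gcongr η ^ e * ?_ * _
        exact pow_le_pow_of_le_one hη0.le (by linarith) he
      _ = η ^ e * (4 * t * η ^ (2 * t)) := by ring
      _ ≤ η ^ e := mul_le_of_le_one_right (by positivity) (four_mul_mul_pow_le_one hη0 hη t)
  calc η ^ (2 * t * e) = (η ^ (2 * e)) ^ t := by rw [← pow_mul]; ring_nf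
    _ ≤ (η ^ e / (4 * t)) ^ t := by gcongr

lemma four_mul_mul_pow_le_pow (hη0 : 0 < η) (hη : η ≤ 1 / 2) {t p : ℕ} (ht : 2 ≤ t)
    (hp : 1 ≤ p) : 4 * t * η ^ (t ^ (10 * p)) ≤ η ^ ((2 * t) ^ p) := by
  have hexp : (2 * t) ^ p + 2 * t ≤ t ^ (10 * p) :=
    calc (2 * t) ^ p + 2 * t ≤ 2 * t * (2 * t) ^ p := by
          nlinarith [Nat.le_self_pow (show p ≠ 0 by omega) (2 * t)]
      _ = (2 * t) ^ (p + 1) := by ring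
      _ ≤ (t ^ 2) ^ (p + 1) := by gcongr; nlinarith
      _ = t ^ (2 * p + 2) := by ring
      _ ≤ t ^ (10 * p) := Nat.pow_le_pow_right (by omega) (by omega)
  calc 4 * t * η ^ (t ^ (10 * p)) ≤ 4 * t * η ^ ((2 * t) ^ p + 2 * t) :=
        mul_le_mul_of_nonneg_left (pow_le_pow_of_le_one hη0.le (by linarith) hexp) (by positivity)
    _ = η ^ ((2 * t) ^ p) * (4 * t * η ^ (2 * t)) := by ring
    _ ≤ η ^ ((2 * t) ^ p) :=
        mul_le_of_le_one_right (by positivity) (four_mul_mul_pow_le_one hη0 hη t)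

end Numerics

namespace SimpleGraph

section Parts

variable {V : Type*} (Γ : SimpleGraph V)

theorem containsCopy_completeMultipartiteGraph {ι : Type*} {a : ι → ℕ} {P : ι → Finset V}
    (hP : Pairwise (Γ.IsCompleteBetween on fun i => (P i : Set V))) (ha : ∀ i, a i ≤ #(P i)) :
    ContainsCopy (completeMultipartiteGraph fun i => Fin (a i)) Γ := by
  let e : ∀ i, Fin (a i) ↪ P i := fun i =>
    (Fin.castLEEmb (ha i)).trans (P i).equivFin.symm.toEmbedding
  refine ⟨fun x => (e x.1 x.2 : V), ?_, fun x y hxy => hP hxy (e x.1 x.2).2 (e y.1 y.2).2⟩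
  rintro ⟨i, x⟩ ⟨j, y⟩ hxy
  obtain rfl | hij := eq_or_ne i j
  · rw [(e i).injective (Subtype.ext hxy : e i x = e i y)]
  · exact absurd hxy (hP hij (e i x).2 (e j y).2).ne

end Parts

variable {V : Type*} [Fintype V] (Γ : SimpleGraph V) [DecidableRel Γ.Adj]

def commonNbrs (A : Finset V) : Finset V := {v | ∀ a ∈ A, Γ.Adj a v}

@[simp]
lemma mem_commonNbrs {A : Finset V} {v : V} :
    v ∈ Γ.commonNbrs A ↔ ∀ a ∈ A, Γ.Adj a v := by
  simp [commonNbrs]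

variable [DecidableEq V]

def cliquesIn (W : Finset V) (k : ℕ) : Finset (Finset V) := {s ∈ Γ.cliqueFinset k | s ⊆ W}

@[simp]
lemma mem_cliquesIn {W s : Finset V} {k : ℕ} :
    s ∈ Γ.cliquesIn W k ↔ Γ.IsNClique k s ∧ s ⊆ W := by
  simp [cliquesIn]

lemma cliqueCount_eq_card_cliqueFinset (k : ℕ) : cliqueCount Γ k = #(Γ.cliqueFinset k) := by
  rw [cliqueCount, ← Set.ncard_coe_finset, coe_cliqueFinset]
  rfl

lemma cliquesIn_univ (k : ℕ) : Γ.cliquesIn univ k = Γ.cliqueFinset k := by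
  simp [cliquesIn]

lemma cliquesIn_subset_powersetCard (W : Finset V) (k : ℕ) :
    Γ.cliquesIn W k ⊆ W.powersetCard k := fun s hs => by
  rw [mem_cliquesIn] at hs
  exact mem_powersetCard.2 ⟨hs.2, hs.1.card_eq⟩

lemma card_cliquesIn_succ_le_sum (W : Finset V) (k : ℕ) :
    #(Γ.cliquesIn W (k + 1)) ≤ ∑ K ∈ Γ.cliquesIn W k, #(W ∩ Γ.commonNbrs K) := by
  rw [← card_sigma]
  refine card_le_card_of_surjOn (fun x => insert x.2 x.1) fun K hK => ?_
  obtain ⟨hK, hKW⟩ := Γ.mem_cliquesIn.1 hK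
  obtain ⟨v, hv⟩ := card_pos.1 (by rw [hK.card_eq]; omega)
  refine ⟨⟨K.erase v, v⟩, ?_, insert_erase hv⟩
  simp only [coe_sigma, Set.mem_sigma_iff, mem_coe, mem_cliquesIn, mem_inter, mem_commonNbrs]
  refine ⟨⟨hK.erase_of_mem hv, (erase_subset _ _).trans hKW⟩, hKW hv, fun a ha => ?_⟩
  obtain ⟨hav, ha⟩ := mem_erase.1 ha
  exact hK.isClique ha hv hav

lemma card_cliquesIn_le_pow (W : Finset V) (k : ℕ) : #(Γ.cliquesIn W k) ≤ Fintype.card V ^ k :=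
  (card_le_card (Γ.cliquesIn_subset_powersetCard W k)).trans (card_powersetCard_le_pow W k)

theorem exists_le_card_cliquesIn_inter_commonNbrs {W : Finset V} {k t : ℕ} (ht : 1 ≤ t)
    {c : ℝ} (hc : 4 * t ≤ c * Fintype.card V)
    (hW : c * Fintype.card V ^ (k + 1) ≤ #(Γ.cliquesIn W (k + 1))) :
    ∃ A ⊆ W, #A = t ∧
      (c / (4 * t)) ^ t * Fintype.card V ^ k ≤ #(Γ.cliquesIn (W ∩ Γ.commonNbrs A) k) := by
  set n : ℝ := (Fintype.card V : ℝ)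
  set 𝒦 := Γ.cliquesIn W k
  set below : Finset V → ℕ := fun A => #{K ∈ 𝒦 | A ⊆ Γ.commonNbrs K}
  have hsum : c * n * n ^ k ≤ ∑ K ∈ 𝒦, (#(W ∩ Γ.commonNbrs K) : ℝ) :=
    calc c * n * n ^ k = c * n ^ (k + 1) := by ring
      _ ≤ #(Γ.cliquesIn W (k + 1)) := hW
      _ ≤ ∑ K ∈ 𝒦, (#(W ∩ Γ.commonNbrs K) : ℝ) := by
        exact_mod_cast Γ.card_cliquesIn_succ_le_sum W k
  have hchoose := div_four_mul_pow_mul_le_sum_choose 𝒦 (fun K => #(W ∩ Γ.commonNbrs K)) ht hc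
    (by simp only [n]; exact_mod_cast Γ.card_cliquesIn_le_pow W k) hsum
  have hswap :
      ∑ K ∈ 𝒦, (#(W ∩ Γ.commonNbrs K)).choose t = ∑ A ∈ W.powersetCard t, below A := by
    refine (sum_congr rfl fun K _ => ?_).trans
      (sum_card_bipartiteAbove_eq_sum_card_bipartiteBelow fun K A => A ⊆ Γ.commonNbrs K)
    rw [← card_powersetCard]
    congr 1
    ext A
    simp only [mem_powersetCard, subset_inter_iff, bipartiteAbove, mem_filter]
    tauto
  have hcn : 0 < c * n := lt_of_lt_of_le (by positivity) hc
  have hn : 0 < n := pos_of_mul_pos_right hcn (pos_of_mul_pos_left hcn (Nat.cast_nonneg _)).le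
  have hc0 : 0 < c := pos_of_mul_pos_left hcn hn.le
  have hlower :
      (c / (4 * t)) ^ t * n ^ k * n ^ t ≤ ∑ A ∈ W.powersetCard t, (below A : ℝ) := by
    calc (c / (4 * t)) ^ t * n ^ k * n ^ t = (c * n / (4 * t)) ^ t * n ^ k := by
          rw [mul_div_right_comm, mul_pow]; ring
      _ ≤ _ := hchoose
      _ = _ := by exact_mod_cast hswap
  have hne := nonempty_of_sum_ne_zero (hlower.trans_lt' (by positivity)).ne'
  obtain ⟨A, hA, hbound⟩ := exists_le_of_sum_le hne
    (f := fun _ => (c / (4 * t)) ^ t * n ^ k) (g := fun A => (below A : ℝ)) <| by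
    calc ∑ A ∈ W.powersetCard t, (c / (4 * t)) ^ t * n ^ k
        = #(W.powersetCard t) * ((c / (4 * t)) ^ t * n ^ k) := by rw [sum_const, nsmul_eq_mul]
      _ ≤ n ^ t * ((c / (4 * t)) ^ t * n ^ k) := by
        refine mul_le_mul_of_nonneg_right ?_ (by positivity)
        simp only [n]; exact_mod_cast card_powersetCard_le_pow W t
      _ ≤ _ := by linarith
  rw [mem_powersetCard] at hA
  refine ⟨A, hA.1, hA.2, hbound.trans (Nat.cast_le.2 (card_le_card fun K hK => ?_))⟩
  obtain ⟨hK, hAK⟩ := mem_filter.1 hK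
  rw [mem_cliquesIn] at hK ⊢
  refine ⟨hK.1, fun x hx => mem_inter.2 ⟨hK.2 hx, (mem_commonNbrs _).2 fun a ha => ?_⟩⟩
  exact ((Γ.mem_commonNbrs).1 (hAK ha) x hx).symm

theorem exists_parts_isCompleteBetween {η : ℝ} (hη0 : 0 < η) (hη : η ≤ 1 / 2) {t : ℕ}
    (ht : 1 ≤ t) {k e : ℕ} {W : Finset V} (b : Fin (k + 1) → ℕ) (he : 2 * t ≤ e)
    (h4t : 4 * t ≤ η ^ (e * (2 * t) ^ k) * Fintype.card V)
    (hW : η ^ e * Fintype.card V ^ (k + 1) ≤ #(Γ.cliquesIn W (k + 1)))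
    (hbt : ∀ i ≠ Fin.last k, b i ≤ t)
    (hb : b (Fin.last k) ≤ η ^ (e * (2 * t) ^ k) * Fintype.card V) :
    ∃ P : Fin (k + 1) → Finset V, (∀ i, P i ⊆ W) ∧ (∀ i, b i ≤ #(P i)) ∧
      Pairwise (Γ.IsCompleteBetween on fun i => (P i : Set V)) := by
  induction k generalizing e W with
  | zero =>
    have : Subsingleton (Fin (0 + 1)) := Fin.subsingleton_one
    refine ⟨fun _ => W, fun _ => subset_rfl, fun i => ?_, Subsingleton.pairwise⟩
    rw [Subsingleton.elim i (Fin.last 0)]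
    have hW1 : #(Γ.cliquesIn W 1) ≤ #W := by
      simpa using card_le_card (Γ.cliquesIn_subset_powersetCard W 1)
    have : (b (Fin.last 0) : ℝ) ≤ #W := by
      rw [zero_add, pow_one] at hW
      simp only [pow_zero, mul_one] at hb
      exact hb.trans (hW.trans (by exact_mod_cast hW1))
    exact_mod_cast this
  | succ k ih =>
    have hexp : e * (2 * t) ^ (k + 1) = 2 * t * e * (2 * t) ^ k := by ring
    have h4t' : 4 * t ≤ η ^ e * Fintype.card V :=
      h4t.trans (mul_le_mul_of_nonneg_right (pow_le_pow_of_le_one hη0.le (by linarith)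
        (Nat.le_mul_of_pos_right _ (by positivity))) (Nat.cast_nonneg _))
    obtain ⟨A, hAW, hA, hcount⟩ := Γ.exists_le_card_cliquesIn_inter_commonNbrs ht h4t' hW
    -- each round multiplies the exponent of the clique density by `2 t`
    obtain ⟨P, hPW, hPb, hP⟩ := ih (e := 2 * t * e) (W := W ∩ Γ.commonNbrs A) (Fin.tail b)
      (by nlinarith) (hexp ▸ h4t)
      ((mul_le_mul_of_nonneg_right (pow_two_mul_mul_le_div_pow hη0 hη ht he)
        (by positivity)).trans hcount)
      (fun i hi => hbt _ ((Fin.succ_ne_last_iff _).2 hi)) (hexp ▸ hb)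
    refine ⟨Fin.cons A P, Fin.cases hAW fun i => (hPW i).trans inter_subset_left,
      Fin.cases (hA ▸ hbt 0 (Fin.last_pos.ne)) hPb,
      pairwise_fin_succ_iff.2 ⟨fun i => ?_, fun i => ?_, hP⟩⟩
    all_goals
      intro x hx y hy
      simp only [Fin.cons_zero, Fin.cons_succ, mem_coe] at hx hy
    · exact ((Γ.mem_commonNbrs.1 (mem_inter.1 (hPW i hx)).2) y hy).symm
    · exact (Γ.mem_commonNbrs.1 (mem_inter.1 (hPW i hy)).2) x hx

end SimpleGraph

theorem zarankiewicz_type (η : ℝ) (hη0 : 0 < η) (hη : η ≤ 1 / 2)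
    (p t : ℕ) (hp : 2 ≤ p) (ht : 2 ≤ t)
    (a : Fin p → ℕ)
    (hat : ∀ i : Fin p, (i : ℕ) + 1 < p → a i ≤ t)
    (δ : ℝ) (hδ : δ = η ^ (t ^ (10 * p)))
    (m : ℕ)
    (hap1 : 1 ≤ a ⟨p - 1, by omega⟩)
    (hap2 : (a ⟨p - 1, by omega⟩ : ℝ) ≤ δ * m)
    (Γ : SimpleGraph (Fin m))
    (hfree : ¬ ContainsCopy (completeMultipartiteGraph (fun i : Fin p => Fin (a i))) Γ) :
    (cliqueCount Γ p : ℝ) ≤ η * (m : ℝ) ^ p := by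
  classical
  obtain ⟨k, rfl⟩ : ∃ k, p = k + 1 := ⟨p - 1, by omega⟩
  rw [show (⟨k + 1 - 1, by omega⟩ : Fin (k + 1)) = Fin.last k from Fin.ext (by simp)]
    at hap1 hap2
  have hδ4 : 4 * t * δ ≤ η ^ (2 * t * (2 * t) ^ k) := by
    rw [hδ, ← pow_succ']
    exact four_mul_mul_pow_le_pow hη0 hη ht (by omega)
  have hδm : 1 ≤ δ * m := le_trans (by exact_mod_cast hap1) hap2
  have hδm4 : 4 * t * (δ * m) ≤ η ^ (2 * t * (2 * t) ^ k) * Fintype.card (Fin m) := by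
    rw [Fintype.card_fin, ← mul_assoc]
    gcongr
  have h4t : 4 * t ≤ η ^ (2 * t * (2 * t) ^ k) * Fintype.card (Fin m) :=
    le_trans (le_mul_of_one_le_right (by positivity) hδm) hδm4
  have hlast : a (Fin.last k) ≤ η ^ (2 * t * (2 * t) ^ k) * Fintype.card (Fin m) := by
    refine hap2.trans (le_trans (le_mul_of_one_le_left (by linarith) ?_) hδm4)
    have : (2 : ℝ) ≤ t := by exact_mod_cast ht
    linarith
  by_contra! hcount
  have hW : η ^ (2 * t) * Fintype.card (Fin m) ^ (k + 1) ≤ #(Γ.cliquesIn univ (k + 1)) := by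
    rw [Γ.cliquesIn_univ, ← Γ.cliqueCount_eq_card_cliqueFinset, Fintype.card_fin]
    refine le_trans ?_ hcount.le
    gcongr
    exact pow_le_of_le_one hη0.le (by linarith) (by omega)
  obtain ⟨P, -, hPa, hP⟩ :=
    Γ.exists_parts_isCompleteBetween hη0 hη (by omega) a le_rfl h4t hW
    (fun i hi => hat i (by simpa using Fin.val_lt_last hi)) hlast
  exact hfree (Γ.containsCopy_completeMultipartiteGraph hP hPa)
end

section
/- Let γ > 0 be real, let p, t, z ≥ 2 be integers, and let δ = γ·(e·r(K_p, K_z))^(−t^(20p)). Then for all integers 1 ≤ a_1 ≤ … ≤ a_{p−1} ≤ t, every integer n ≥ 2t·(e·r(K_p,K_z))^p/γ, and every integer a_p with 1 ≤ a_p ≤ δn, one has r(K_p(a_1,…,a_p), K_z) ≤ γn. -/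
open SimpleGraph

/-!
In a graph whose complement has no `K_z`, every vertex set `C` contains a vertex with at least
`#C / z - 1` neighbours in `C`. Iterating inside these neighbourhoods `q = t(p-1)` times, a graph on
`z^q (m + q)` vertices yields a `q`-clique all of whose vertices are adjacent to a common set of
`m` further vertices. The first `p - 1` parts of `K_p(a)` fit into the clique and the last one
into the common neighbourhood, so `r(K_p(a), K_z) ≤ z^q (a_p + q)`. Since `z ≤ r(K_p, K_z)`, the
factor `(e r(K_p, K_z))^(t^(20p))` in `δ` swallows `2 q z^q`, and `a_p ≤ δ n` gives the bound
`γ n`.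
-/

open Finset

namespace SimpleGraph

variable {α β V : Type*}

lemma IsContained.containsCopy {G : SimpleGraph α} {Γ : SimpleGraph β} (h : G ⊑ Γ) :
    ContainsCopy G Γ :=
  let ⟨c⟩ := h
  ⟨c, c.injective, fun _ _ hab => c.toHom.map_adj hab⟩

lemma cliqueFree_compl_of_not_containsCopy {Γ : SimpleGraph β} {z : ℕ}
    (h : ¬ ContainsCopy (⊤ : SimpleGraph (Fin z)) Γᶜ) : Γᶜ.CliqueFree z := by
  by_contra hΓ
  exact h ((not_cliqueFree_iff_top_isContained z).1 hΓ).containsCopy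

section Degree

variable [DecidableEq V] (Γ : SimpleGraph V) [DecidableRel Γ.Adj]

/-- Greedy independent set: each step keeps a vertex and discards its fewer than `d` neighbours. -/
lemma card_le_mul_of_forall_degree_lt {z d : ℕ} {C : Finset V}
    (hC : ∀ s ⊆ C, ¬ Γᶜ.IsNClique z s) (hd : ∀ v ∈ C, #{u ∈ C | Γ.Adj v u} < d) :
    #C ≤ z * d := by
  induction z generalizing C with
  | zero => exact absurd (isNClique_empty.2 rfl) (hC ∅ (empty_subset C))
  | succ z ih =>
    obtain rfl | ⟨v, hv⟩ := C.eq_empty_or_nonempty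
    · simp
    set C' := {u ∈ C | u ≠ v ∧ ¬ Γ.Adj v u}
    have hC' : ∀ s ⊆ C', ¬ Γᶜ.IsNClique z s := by
      intro s hs hcl
      refine hC (insert v s) (insert_subset hv fun u hu => (mem_filter.1 (hs hu)).1)
        (hcl.insert fun u hu => ?_)
      have hu' := (mem_filter.1 (hs hu)).2
      exact (compl_adj Γ v u).2 ⟨hu'.1.symm, hu'.2⟩
    have hcover : C ⊆ C' ∪ insert v {u ∈ C | Γ.Adj v u} := by
      intro u hu
      by_cases huv : u = v
      · simp [huv]
      by_cases hadj : Γ.Adj v u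
      · simp [hu, hadj]
      · simp [C', hu, huv, hadj]
    calc #C ≤ #C' + (#{u ∈ C | Γ.Adj v u} + 1) :=
          (card_le_card hcover).trans ((card_union_le _ _).trans
            (Nat.add_le_add_left (card_insert_le _ _) _))
      _ ≤ z * d + d := by
          gcongr
          · exact ih hC' fun u hu => (card_le_card (filter_subset_filter _
              (filter_subset _ C))).trans_lt (hd u (mem_filter.1 hu).1)
          · exact hd v hv
      _ = (z + 1) * d := by ring

lemma exists_le_degree_of_cliqueFree_compl {z d : ℕ} {C : Finset V} (hΓ : Γᶜ.CliqueFree z)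
    (hC : z * d < #C) : ∃ v ∈ C, d ≤ #{u ∈ C | Γ.Adj v u} := by
  by_contra! h
  exact (card_le_mul_of_forall_degree_lt Γ (fun s _ => hΓ s) h).not_gt hC

/-- Each step passes to the neighbourhood of a vertex of degree at least `#C / z - 1`. -/
lemma exists_isNClique_forall_adj_of_cliqueFree_compl {z : ℕ} (hΓ : Γᶜ.CliqueFree z)
    (m k : ℕ) (C : Finset V) (hC : z ^ k * (m + k) ≤ #C) :
    ∃ Q ⊆ C, ∃ D ⊆ C, Γ.IsNClique k Q ∧ m ≤ #D ∧
      ∀ u ∈ Q, ∀ v ∈ D, Γ.Adj u v := by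
  induction k generalizing C with
  | zero => exact ⟨∅, empty_subset C, C, subset_refl C, by simp, by simpa using hC, by simp⟩
  | succ k ih =>
    have hz : 0 < z := Nat.pos_of_ne_zero fun h => not_cliqueFree_zero (h ▸ hΓ)
    have hlt : z * (z ^ k * (m + k)) < #C :=
      calc z * (z ^ k * (m + k)) < z ^ (k + 1) * (m + (k + 1)) := by
            rw [← mul_assoc, ← pow_succ']
            exact Nat.mul_lt_mul_of_pos_left (by omega) (by positivity)
        _ ≤ #C := hC
    obtain ⟨v, hv, hdeg⟩ := exists_le_degree_of_cliqueFree_compl Γ hΓ hlt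
    obtain ⟨Q, hQ, D, hD, hQcl, hmD, hQD⟩ := ih {u ∈ C | Γ.Adj v u} hdeg
    have hvN : ∀ u ∈ {u ∈ C | Γ.Adj v u}, Γ.Adj v u := fun u hu => (mem_filter.1 hu).2
    refine ⟨insert v Q, insert_subset hv (hQ.trans (filter_subset _ C)), D,
      hD.trans (filter_subset _ C), hQcl.insert fun u hu => hvN u (hQ hu), hmD, ?_⟩
    intro u hu w hw
    obtain rfl | hu := mem_insert.1 hu
    · exact hvN w (hD hw)
    · exact hQD u hu w hw

end Degree

lemma containsCopy_of_isClique_of_forall_adj [Fintype α] {G : SimpleGraph α}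
    {Γ : SimpleGraph β} (P : α → Prop) [DecidablePred P]
    (hG : ∀ a b, ¬ P a → ¬ P b → ¬ G.Adj a b)
    {Q D : Finset β} (hQ : Γ.IsClique (Q : Set β)) (hQD : ∀ u ∈ Q, ∀ v ∈ D, Γ.Adj u v)
    (hPQ : Fintype.card {a // P a} ≤ #Q) (hPD : Fintype.card {a // ¬ P a} ≤ #D) :
    ContainsCopy G Γ := by
  obtain ⟨g⟩ := Function.Embedding.nonempty_of_card_le (β := Q)
    (hPQ.trans_eq (Fintype.card_coe Q).symm)
  obtain ⟨h⟩ := Function.Embedding.nonempty_of_card_le (β := D)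
    (hPD.trans_eq (Fintype.card_coe D).symm)
  have hne : ∀ a b, ((g a : Q) : β) ≠ h b := fun a b => Γ.ne_of_adj (hQD _ (g a).2 _ (h b).2)
  refine ⟨fun a => if ha : P a then (g ⟨a, ha⟩ : β) else h ⟨a, ha⟩, ?_, ?_⟩
  · intro a b hab
    by_cases ha : P a <;> by_cases hb : P b <;> simp only [ha, hb, dite_true, dite_false] at hab
    · exact congrArg Subtype.val (g.injective (Subtype.ext hab))
    · exact absurd hab (hne _ _)
    · exact absurd hab.symm (hne _ _)
    · exact congrArg Subtype.val (h.injective (Subtype.ext hab))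
  · intro a b hab
    by_cases ha : P a <;> by_cases hb : P b <;> simp only [ha, hb, dite_true, dite_false]
    · refine hQ (g _).2 (g _).2 fun heq => G.ne_of_adj hab ?_
      exact congrArg Subtype.val (g.injective (Subtype.ext heq))
    · exact hQD _ (g _).2 _ (h _).2
    · exact (hQD _ (g _).2 _ (h _).2).symm
    · exact absurd hab (hG a b ha hb)

lemma containsCopy_completeMultipartiteGraph_s12 {ι : Type*} [Fintype ι] [DecidableEq ι]
    {W : ι → Type*} [∀ i, Fintype (W i)] {Γ : SimpleGraph β} (i₀ : ι) {Q D : Finset β}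
    (hQ : Γ.IsClique (Q : Set β)) (hQD : ∀ u ∈ Q, ∀ v ∈ D, Γ.Adj u v)
    (hWQ : ∑ i ∈ univ.erase i₀, Fintype.card (W i) ≤ #Q)
    (hWD : Fintype.card (W i₀) ≤ #D) :
    ContainsCopy (completeMultipartiteGraph W) Γ := by
  have hfiber : Fintype.card {s : Σ i, W i // s.1 = i₀} = Fintype.card (W i₀) :=
    Fintype.card_congr (Equiv.sigmaSubtype i₀)
  refine containsCopy_of_isClique_of_forall_adj (fun s => s.1 ≠ i₀) ?_ hQ hQD ?_ ?_
  · intro a b ha hb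
    simp_all [completeMultipartiteGraph]
  · rw [Fintype.card_subtype_compl, hfiber, Fintype.card_sigma,
      ← add_sum_erase _ _ (mem_univ i₀)]
    simpa using hWQ
  · simpa [hfiber] using hWD

end SimpleGraph

lemma le_ramseyNumber {α : Type*} {G : SimpleGraph α} {x y : α} (hxy : G.Adj x y) {z : ℕ}
    (h : ramseyNumber G (⊤ : SimpleGraph (Fin z)) ≠ 0) :
    z ≤ ramseyNumber G (⊤ : SimpleGraph (Fin z)) := by
  have hmem := Nat.sInf_mem (Set.nonempty_iff_ne_empty.2 fun he =>
    h (Nat.sInf_eq_zero.2 (Or.inr he)))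
  rcases hmem ⊥ with ⟨f, -, hf⟩ | ⟨f, hf, -⟩
  · simpa using hf hxy
  · simpa [ramseyNumber] using Fintype.card_le_of_injective f hf

/-- All parts but `W i₀` go into a `q`-clique and `W i₀` into its common neighbourhood. -/
lemma ramseyNumber_completeMultipartiteGraph_le {ι : Type*} [Fintype ι] [DecidableEq ι]
    {W : ι → Type*} [∀ i, Fintype (W i)] (i₀ : ι) (z : ℕ) {q : ℕ}
    (hq : ∑ i ∈ univ.erase i₀, Fintype.card (W i) ≤ q) :
    ramseyNumber (completeMultipartiteGraph W) (⊤ : SimpleGraph (Fin z)) ≤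
      z ^ q * (Fintype.card (W i₀) + q) := by
  refine Nat.sInf_le fun Γ => or_iff_not_imp_right.2 fun h => ?_
  classical
  obtain ⟨Q, -, D, -, hQ, hD, hQD⟩ := exists_isNClique_forall_adj_of_cliqueFree_compl Γ
    (cliqueFree_compl_of_not_containsCopy h) (Fintype.card (W i₀)) q univ (by simp)
  exact containsCopy_completeMultipartiteGraph_s12 i₀ hQ.isClique hQD (hq.trans hQ.card_eq.ge) hD

lemma two_mul_mul_pow_le_exp_mul_pow {q z R T : ℕ} (hR : 1 ≤ R) (hzR : z ≤ R)
    (hqT : q + 1 ≤ T) : 2 * (q : ℝ) * z ^ q ≤ (Real.exp 1 * R) ^ T := by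
  have hnat : 2 * q * z ^ q ≤ (2 * R) ^ T :=
    calc 2 * q * z ^ q ≤ 2 * 2 ^ q * R ^ q := by gcongr; exact Nat.lt_two_pow_self.le
      _ = 2 * (2 * R) ^ q := by ring
      _ ≤ (2 * R) ^ (q + 1) := by rw [pow_succ']; gcongr; omega
      _ ≤ (2 * R) ^ T := Nat.pow_le_pow_right (by omega) hqT
  calc 2 * (q : ℝ) * z ^ q ≤ (2 * R) ^ T := by exact_mod_cast hnat
    _ ≤ (Real.exp 1 * R) ^ T := by
        gcongr
        linarith [Real.add_one_le_exp 1]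

lemma pow_mul_add_le_mul_exp_mul_pow {m : ℝ} {q z R T : ℕ} (hm : 1 ≤ m) (hq : 1 ≤ q)
    (hR : 1 ≤ R) (hzR : z ≤ R) (hqT : q + 1 ≤ T) :
    z ^ q * (m + q) ≤ m * (Real.exp 1 * R) ^ T :=
  have hq' : (1 : ℝ) ≤ q := by exact_mod_cast hq
  have hZ : (0 : ℝ) ≤ z ^ q := by positivity
  calc z ^ q * (m + q) ≤ m * (2 * q * z ^ q) := by
        nlinarith [mul_nonneg (mul_nonneg (sub_nonneg.2 hm) (sub_nonneg.2 hq')) hZ,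
          mul_nonneg (sub_nonneg.2 hm) hZ, mul_nonneg (sub_nonneg.2 hq') hZ]
    _ ≤ m * (Real.exp 1 * R) ^ T := by
        gcongr
        exact two_mul_mul_pow_le_exp_mul_pow hR hzR hqT

lemma sub_one_mul_add_one_le_pow {p t : ℕ} (hp : 1 ≤ p) (ht : 2 ≤ t) :
    (p - 1) * t + 1 ≤ t ^ (20 * p) :=
  calc (p - 1) * t + 1 ≤ t * p := by
        have : t ≤ p * t := Nat.le_mul_of_pos_left t hp
        rw [Nat.sub_one_mul, mul_comm t p]
        omega
    _ ≤ t * t ^ p := Nat.mul_le_mul_left _ (Nat.lt_pow_self ht).le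
    _ = t ^ (p + 1) := by ring
    _ ≤ t ^ (20 * p) := Nat.pow_le_pow_right (by omega) (by omega)

theorem off_diag_bound (γ : ℝ) (p t z : ℕ) (hp : 2 ≤ p) (ht : 2 ≤ t)
    (R : ℕ) (hR : R = ramseyNumber (⊤ : SimpleGraph (Fin p)) (⊤ : SimpleGraph (Fin z)))
    (δ : ℝ) (hδ : δ = γ * ((Real.exp 1 * (R : ℝ)) ^ (t ^ (20 * p)))⁻¹)
    (a : Fin p → ℕ)
    (hat : ∀ i : Fin p, (i : ℕ) + 1 < p → a i ≤ t)
    (n : ℕ)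
    (hap1 : 1 ≤ a ⟨p - 1, by omega⟩)
    (hap2 : (a ⟨p - 1, by omega⟩ : ℝ) ≤ δ * n) :
    (ramseyNumber (completeMultipartiteGraph (fun i : Fin p => Fin (a i)))
        (⊤ : SimpleGraph (Fin z)) : ℝ) ≤ γ * n := by
  set last : Fin p := ⟨p - 1, by omega⟩
  set X := (Real.exp 1 * R) ^ t ^ (20 * p)
  have hm : (1 : ℝ) ≤ a last := by exact_mod_cast hap1
  have hR1 : 1 ≤ R := by
    refine Nat.one_le_iff_ne_zero.2 fun hR0 => ?_
    simp [hδ, X, hR0, zero_pow (by positivity : t ^ (20 * p) ≠ 0)] at hap2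
    linarith
  have hmX : a last * X ≤ γ * n := by
    have hX : 0 < X := by positivity
    rw [hδ] at hap2
    calc (a last : ℝ) * X ≤ γ * X⁻¹ * n * X := by gcongr
      _ = γ * n := by field_simp
  have hzR : z ≤ R := hR ▸ le_ramseyNumber (x := ⟨0, by omega⟩) (y := ⟨1, by omega⟩)
    (by simp [Fin.ext_iff]) (by omega)
  have hsum : ∑ i ∈ univ.erase last, Fintype.card (Fin (a i)) ≤ #(univ.erase last) * t := by
    refine sum_le_card_nsmul _ _ _ fun i hi => ?_
    have := Fin.val_ne_of_ne (ne_of_mem_erase hi)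
    simpa using hat i (by simp [last] at this; omega)
  rw [card_erase_of_mem (mem_univ _), card_univ, Fintype.card_fin] at hsum
  calc _ ≤ ((z ^ ((p - 1) * t) * (a last + (p - 1) * t) : ℕ) : ℝ) := by
        exact_mod_cast Fintype.card_fin (a last) ▸
          ramseyNumber_completeMultipartiteGraph_le last z hsum
    _ ≤ a last * X := by
        exact_mod_cast pow_mul_add_le_mul_exp_mul_pow hm (Nat.mul_pos (by omega) (by omega))
          hR1 hzR (sub_one_mul_add_one_le_pow (by omega) ht)
    _ ≤ γ * n := hmX
end
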